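/- arXiv:2404.09176 — 17 statements merged into one kernel-verified Lean document; each statement's English description precedes it below -/
import Mathlib

section
/- Let $(A, \cdot_{\alpha,\beta})_{\alpha,\beta\in\Omega}$ be an $\Omega$-associative algebra and let $p_\alpha, q_\alpha : A \to A$ be two commuting families of $\Omega$-associative algebra morphisms. Define $x \bullet_{\alpha,\beta} y := p_\alpha(x) \cdot_{\alpha,\beta} q_\beta(y)$. Then $(A, \bullet_{\alpha,\beta}, p_\alpha, q_\alpha)_{\alpha,\beta\in\Omega}$ is a BiHom-$\Omega$-associative algebra. -/
/-- Yau twist of an Ω-associative algebra gives a BiHom-Ω-associative algebra. -/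
theorem stmt_0
    {K : Type*} [Field K] {Ω : Type*} [Semigroup Ω]
    {A : Type*} [AddCommGroup A] [Module K A]
    (mul : Ω → Ω → A →ₗ[K] A →ₗ[K] A)
    (p q : Ω → A →ₗ[K] A)
    -- Ω-associativity
    (hassoc : ∀ (α β γ : Ω) (x y z : A),
      mul (α * β) γ (mul α β x y) z = mul α (β * γ) x (mul β γ y z))
    -- (p_α), (q_α) are Ω-associative algebra morphisms
    (hp : ∀ (α β : Ω) (x y : A), p (α * β) (mul α β x y) = mul α β (p α x) (p β y))
    (hq : ∀ (α β : Ω) (x y : A), q (α * β) (mul α β x y) = mul α β (q α x) (q β y))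
    -- the families commute
    (hpq : ∀ (α : Ω) (x : A), p α (q α x) = q α (p α x))
    -- the twisted multiplication
    (bull : Ω → Ω → A → A → A)
    (hbull : ∀ (α β : Ω) (x y : A), bull α β x y = mul α β (p α x) (q β y)) :
    -- multiplicativity
    (∀ (α β : Ω) (x y : A), p (α * β) (bull α β x y) = bull α β (p α x) (p β y)) ∧
    (∀ (α β : Ω) (x y : A), q (α * β) (bull α β x y) = bull α β (q α x) (q β y)) ∧
    -- BiHom-Ω-associativity
    (∀ (α β γ : Ω) (x y z : A),
      bull α (β * γ) (p α x) (bull β γ y z) = bull (α * β) γ (bull α β x y) (q γ z)) := by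
  refine ⟨?_, ?_, ?_⟩
  · intro α β x y
    simp only [hbull, hp, hpq]
  · intro α β x y
    simp only [hbull, hq, hpq]
  · intro α β γ x y z
    simp only [hbull, hp, hq, hpq, hassoc]
end

section
/- Let $(A, \bullet_{\alpha,\beta}, p_\alpha, q_\alpha)_{\alpha,\beta\in\Omega}$ be a BiHom-$\Omega$-associative algebra and let $p'_\alpha, q'_\alpha: A \to A$ be BiHom-$\Omega$-associative algebra morphisms such that any two of the families $p_\alpha, q_\alpha, p'_\alpha, q'_\alpha$ commute with each other. Define $x \bullet'_{\alpha,\beta} y := p'_\alpha(x) \bullet_{\alpha,\beta} q'_\beta(y)$. Then $(A, \bullet'_{\alpha,\beta}, p_\alpha\circ p'_\alpha, q_\alpha\circ q'_\alpha)_{\alpha,\beta\in\Omega}$ is a BiHom-$\Omega$-associative algebra. -/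
/-- General Yau twist of a BiHom-Ω-associative algebra. -/
theorem stmt_1
    {K : Type*} [Field K] {Ω : Type*} [Semigroup Ω]
    {A : Type*} [AddCommGroup A] [Module K A]
    (mul : Ω → Ω → A →ₗ[K] A →ₗ[K] A)
    (p q p' q' : Ω → A →ₗ[K] A)
    -- (A, mul, p, q) is a BiHom-Ω-associative algebra
    (hp : ∀ (α β : Ω) (x y : A), p (α * β) (mul α β x y) = mul α β (p α x) (p β y))
    (hq : ∀ (α β : Ω) (x y : A), q (α * β) (mul α β x y) = mul α β (q α x) (q β y))
    (hpq : ∀ (α : Ω) (x : A), p α (q α x) = q α (p α x))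
    (hassoc : ∀ (α β γ : Ω) (x y z : A),
      mul α (β * γ) (p α x) (mul β γ y z) = mul (α * β) γ (mul α β x y) (q γ z))
    -- p', q' are BiHom-Ω-associative algebra morphisms
    (hp' : ∀ (α β : Ω) (x y : A), p' (α * β) (mul α β x y) = mul α β (p' α x) (p' β y))
    (hq' : ∀ (α β : Ω) (x y : A), q' (α * β) (mul α β x y) = mul α β (q' α x) (q' β y))
    -- any two of the four families commute with each other
    (hpp' : ∀ (α : Ω) (x : A), p α (p' α x) = p' α (p α x))
    (hpq' : ∀ (α : Ω) (x : A), p α (q' α x) = q' α (p α x))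
    (hqp' : ∀ (α : Ω) (x : A), q α (p' α x) = p' α (q α x))
    (hqq' : ∀ (α : Ω) (x : A), q α (q' α x) = q' α (q α x))
    (hp'q' : ∀ (α : Ω) (x : A), p' α (q' α x) = q' α (p' α x))
    -- the twisted multiplication
    (mul' : Ω → Ω → A → A → A)
    (hmul' : ∀ (α β : Ω) (x y : A), mul' α β x y = mul α β (p' α x) (q' β y)) :
    -- (A, mul', p ∘ p', q ∘ q') is a BiHom-Ω-associative algebra
    (∀ (α β : Ω) (x y : A),
      p (α * β) (p' (α * β) (mul' α β x y)) = mul' α β (p α (p' α x)) (p β (p' β y))) ∧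
    (∀ (α β : Ω) (x y : A),
      q (α * β) (q' (α * β) (mul' α β x y)) = mul' α β (q α (q' α x)) (q β (q' β y))) ∧
    (∀ (α : Ω) (x : A), p α (p' α (q α (q' α x))) = q α (q' α (p α (p' α x)))) ∧
    (∀ (α β γ : Ω) (x y z : A),
      mul' α (β * γ) (p α (p' α x)) (mul' β γ y z)
        = mul' (α * β) γ (mul' α β x y) (q γ (q' γ z))) := by
  refine ⟨fun α β x y => ?_, fun α β x y => ?_, fun α x => ?_, fun α β γ x y z => ?_⟩
  · rw [hmul', hmul', hp', hp, hpp', hp'q', hpq']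
  · rw [hmul', hmul', hq', hq, ← hp'q', hqp', hqq', hqq']
  · rw [hqq', hp'q', hpq', hpp', hpq, ← hqp', ← hqq', ← hpp']
  -- Once p' and q' are pushed inside, this is `hassoc` at p' (p' x), q' (p' y), q' (q' z).
  · rw [hmul', hmul', hmul', hmul', hq', ← hpp', hassoc, hp', hp'q', hqq']
end

section
/- Let $(A, \bullet_{\alpha,\beta}, p_\alpha, q_\alpha)_{\alpha,\beta\in\Omega}$ be a BiHom-$\Omega$-associative algebra and let $(R_\alpha)_{\alpha\in\Omega}$ be a Rota-Baxter family of weight $\lambda$ on $A$ with $R_\alpha\circ p_\alpha = p_\alpha\circ R_\alpha$ and $R_\alpha\circ q_\alpha = q_\alpha\circ R_\alpha$. Define $x \star_{\alpha,\beta} y := x\bullet_{\alpha,\beta}R_\beta(y) + R_\alpha(x)\bullet_{\alpha,\beta}y + \lambda\, x\bullet_{\alpha,\beta}y$. Then $(A, \star_{\alpha,\beta}, p_\alpha, q_\alpha)_{\alpha,\beta\in\Omega}$ is a BiHom-$\Omega$-associative algebra. -/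
/-- A Rota-Baxter family of weight λ on a BiHom-Ω-associative algebra induces a new
BiHom-Ω-associative algebra. -/
theorem stmt_2
    {K : Type*} [Field K] {Ω : Type*} [Semigroup Ω]
    {A : Type*} [AddCommGroup A] [Module K A]
    (mul : Ω → Ω → A →ₗ[K] A →ₗ[K] A)
    (p q : Ω → A →ₗ[K] A)
    (lam : K)
    -- (A, mul, p, q) is a BiHom-Ω-associative algebra
    (hp : ∀ (α β : Ω) (x y : A), p (α * β) (mul α β x y) = mul α β (p α x) (p β y))
    (hq : ∀ (α β : Ω) (x y : A), q (α * β) (mul α β x y) = mul α β (q α x) (q β y))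
    (hpq : ∀ (α : Ω) (x : A), p α (q α x) = q α (p α x))
    (hassoc : ∀ (α β γ : Ω) (x y z : A),
      mul α (β * γ) (p α x) (mul β γ y z) = mul (α * β) γ (mul α β x y) (q γ z))
    -- (R_α) is a Rota-Baxter family of weight λ
    (R : Ω → A →ₗ[K] A)
    (hRB : ∀ (α β : Ω) (x y : A),
      mul α β (R α x) (R β y)
        = R (α * β) (mul α β (R α x) y + mul α β x (R β y) + lam • mul α β x y))
    (hRp : ∀ (α : Ω) (x : A), R α (p α x) = p α (R α x))
    (hRq : ∀ (α : Ω) (x : A), R α (q α x) = q α (R α x))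
    -- the new operation
    (star : Ω → Ω → A → A → A)
    (hstar : ∀ (α β : Ω) (x y : A),
      star α β x y = mul α β x (R β y) + mul α β (R α x) y + lam • mul α β x y) :
    -- (A, star, p, q) is a BiHom-Ω-associative algebra
    (∀ (α β : Ω) (x y : A), p (α * β) (star α β x y) = star α β (p α x) (p β y)) ∧
    (∀ (α β : Ω) (x y : A), q (α * β) (star α β x y) = star α β (q α x) (q β y)) ∧
    (∀ (α β γ : Ω) (x y z : A),
      star α (β * γ) (p α x) (star β γ y z) = star (α * β) γ (star α β x y) (q γ z)) := by

  have key : ∀ (α β : Ω) (x y : A),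
      R (α * β) (mul α β x (R β y) + mul α β (R α x) y + lam • mul α β x y)
        = mul α β (R α x) (R β y) := by
    intro α β x y
    rw [show (mul α β x (R β y) + mul α β (R α x) y + lam • mul α β x y)
        = (mul α β (R α x) y + mul α β x (R β y) + lam • mul α β x y) by abel, ← hRB]
  refine ⟨?_, ?_, ?_⟩
  · intro α β x y
    simp only [hstar, map_add, map_smul, LinearMap.add_apply, LinearMap.smul_apply,
      hp, hRp]
  · intro α β x y
    simp only [hstar, map_add, map_smul, LinearMap.add_apply, LinearMap.smul_apply,
      hq, hRq]
  · intro α β γ x y z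
    rw [hstar β γ y z, hstar α β x y,
      hstar α (β * γ) (p α x),
      hstar (α * β) γ _ (q γ z), key, key]
    simp only [map_add, map_smul, LinearMap.add_apply, LinearMap.smul_apply,
      hRp, hRq, hassoc]
    module
end

section
/- Let $(A, \prec_{\alpha,\beta}, \succ_{\alpha,\beta})_{\alpha,\beta\in\Omega}$ be an $\Omega$-dendriform algebra and let $p_\alpha, q_\alpha: A\to A$ be two commuting families of $\Omega$-dendriform algebra morphisms. Define $x\prec'_{\alpha,\beta}y := p_\alpha(x)\prec_{\alpha,\beta}q_\beta(y)$ and $x\succ'_{\alpha,\beta}y := p_\alpha(x)\succ_{\alpha,\beta}q_\beta(y)$. Then $(A, \prec'_{\alpha,\beta}, \succ'_{\alpha,\beta}, p_\alpha, q_\alpha)_{\alpha,\beta\in\Omega}$ is a BiHom-$\Omega$-dendriform algebra. -/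
/-!
Each BiHom axiom of the twisted operations unfolds to the corresponding dendriform axiom with all
three arguments moved by `p` or `q`: multiplicativity of `p` and `q` pushes them through the inner
product, additivity through the inner sum, and `p ∘ q = q ∘ p` brings the middle argument to the
normal form `q (p y)` on both sides.
-/

section OmegaDendriform

variable {Ω A : Type*} [Mul Ω]

structure IsOmegaDendriformHom (f : Ω → A → A) (prec succ : Ω → Ω → A → A → A) : Prop where
  map_prec : ∀ (α β : Ω) (x y : A), f (α * β) (prec α β x y) = prec α β (f α x) (f β y)
  map_succ : ∀ (α β : Ω) (x y : A), f (α * β) (succ α β x y) = succ α β (f α x) (f β y)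

def yauTwist (op : Ω → Ω → A → A → A) (p q : Ω → A → A) : Ω → Ω → A → A → A :=
  fun α β x y => op α β (p α x) (q β y)

variable {prec succ : Ω → Ω → A → A → A}

theorem IsOmegaDendriformHom.yauTwist {f p q : Ω → A → A} (hf : IsOmegaDendriformHom f prec succ)
    (hfp : ∀ α x, f α (p α x) = p α (f α x)) (hfq : ∀ α x, f α (q α x) = q α (f α x)) :
    IsOmegaDendriformHom f (yauTwist prec p q) (yauTwist succ p q) where
  map_prec α β x y := by simp only [_root_.yauTwist, hf.map_prec, hfp, hfq]
  map_succ α β x y := by simp only [_root_.yauTwist, hf.map_succ, hfp, hfq]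

variable [Add A]

structure IsOmegaDendriform (prec succ : Ω → Ω → A → A → A) : Prop where
  prec_prec : ∀ (α β γ : Ω) (x y z : A),
    prec (α * β) γ (prec α β x y) z = prec α (β * γ) x (prec β γ y z + succ β γ y z)
  succ_prec : ∀ (α β γ : Ω) (x y z : A),
    prec (α * β) γ (succ α β x y) z = succ α (β * γ) x (prec β γ y z)
  succ_succ : ∀ (α β γ : Ω) (x y z : A),
    succ (α * β) γ (prec α β x y + succ α β x y) z = succ α (β * γ) x (succ β γ y z)

structure IsBiHomOmegaDendriform (prec succ : Ω → Ω → A → A → A) (p q : Ω → A → A) : Prop where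
  hom_p : IsOmegaDendriformHom p prec succ
  hom_q : IsOmegaDendriformHom q prec succ
  prec_prec : ∀ (α β γ : Ω) (x y z : A),
    prec (α * β) γ (prec α β x y) (q γ z) = prec α (β * γ) (p α x) (prec β γ y z + succ β γ y z)
  succ_prec : ∀ (α β γ : Ω) (x y z : A),
    prec (α * β) γ (succ α β x y) (q γ z) = succ α (β * γ) (p α x) (prec β γ y z)
  succ_succ : ∀ (α β γ : Ω) (x y z : A),
    succ α (β * γ) (p α x) (succ β γ y z) = succ (α * β) γ (prec α β x y + succ α β x y) (q γ z)

theorem IsOmegaDendriform.yauTwist (h : IsOmegaDendriform prec succ) {p q : Ω → A →ₙ+ A}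
    (hp : IsOmegaDendriformHom (fun α => p α) prec succ)
    (hq : IsOmegaDendriformHom (fun α => q α) prec succ) (hpq : ∀ α x, p α (q α x) = q α (p α x)) :
    IsBiHomOmegaDendriform (yauTwist prec (fun α => p α) (fun α => q α))
      (yauTwist succ (fun α => p α) (fun α => q α)) (fun α => p α) (fun α => q α) where
  hom_p := hp.yauTwist (fun _ _ => rfl) hpq
  hom_q := hq.yauTwist (fun α x => (hpq α x).symm) (fun _ _ => rfl)
  prec_prec α β γ x y z := by
    simp only [_root_.yauTwist, hp.map_prec, hq.map_prec, hq.map_succ, map_add, hpq, h.prec_prec]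
  succ_prec α β γ x y z := by
    simp only [_root_.yauTwist, hp.map_succ, hq.map_prec, hpq, h.succ_prec]
  succ_succ α β γ x y z := by
    simp only [_root_.yauTwist, hp.map_prec, hp.map_succ, hq.map_succ, map_add, hpq, h.succ_succ]

end OmegaDendriform

/-- Yau twist of an Ω-dendriform algebra gives a BiHom-Ω-dendriform algebra. -/
theorem stmt_3
    {K : Type*} [Field K] {Ω : Type*} [Semigroup Ω]
    {A : Type*} [AddCommGroup A] [Module K A]
    (prec succ : Ω → Ω → A →ₗ[K] A →ₗ[K] A)
    (p q : Ω → A →ₗ[K] A)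
    -- Ω-dendriform axioms
    (hden1 : ∀ (α β γ : Ω) (x y z : A),
      prec (α * β) γ (prec α β x y) z = prec α (β * γ) x (prec β γ y z + succ β γ y z))
    (hden2 : ∀ (α β γ : Ω) (x y z : A),
      prec (α * β) γ (succ α β x y) z = succ α (β * γ) x (prec β γ y z))
    (hden3 : ∀ (α β γ : Ω) (x y z : A),
      succ (α * β) γ (prec α β x y + succ α β x y) z = succ α (β * γ) x (succ β γ y z))
    -- p, q are Ω-dendriform algebra morphisms
    (hpprec : ∀ (α β : Ω) (x y : A), p (α * β) (prec α β x y) = prec α β (p α x) (p β y))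
    (hpsucc : ∀ (α β : Ω) (x y : A), p (α * β) (succ α β x y) = succ α β (p α x) (p β y))
    (hqprec : ∀ (α β : Ω) (x y : A), q (α * β) (prec α β x y) = prec α β (q α x) (q β y))
    (hqsucc : ∀ (α β : Ω) (x y : A), q (α * β) (succ α β x y) = succ α β (q α x) (q β y))
    -- the families commute
    (hpq : ∀ (α : Ω) (x : A), p α (q α x) = q α (p α x))
    -- the twisted operations
    (prec' succ' : Ω → Ω → A → A → A)
    (hprec' : ∀ (α β : Ω) (x y : A), prec' α β x y = prec α β (p α x) (q β y))
    (hsucc' : ∀ (α β : Ω) (x y : A), succ' α β x y = succ α β (p α x) (q β y)) :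
    -- (A, prec', succ', p, q) is a BiHom-Ω-dendriform algebra
    (∀ (α β : Ω) (x y : A), p (α * β) (prec' α β x y) = prec' α β (p α x) (p β y)) ∧
    (∀ (α β : Ω) (x y : A), p (α * β) (succ' α β x y) = succ' α β (p α x) (p β y)) ∧
    (∀ (α β : Ω) (x y : A), q (α * β) (prec' α β x y) = prec' α β (q α x) (q β y)) ∧
    (∀ (α β : Ω) (x y : A), q (α * β) (succ' α β x y) = succ' α β (q α x) (q β y)) ∧
    (∀ (α β γ : Ω) (x y z : A),
      prec' (α * β) γ (prec' α β x y) (q γ z)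
        = prec' α (β * γ) (p α x) (prec' β γ y z + succ' β γ y z)) ∧
    (∀ (α β γ : Ω) (x y z : A),
      prec' (α * β) γ (succ' α β x y) (q γ z) = succ' α (β * γ) (p α x) (prec' β γ y z)) ∧
    (∀ (α β γ : Ω) (x y z : A),
      succ' α (β * γ) (p α x) (succ' β γ y z)
        = succ' (α * β) γ (prec' α β x y + succ' α β x y) (q γ z)) := by
  obtain rfl : prec' = yauTwist (fun α β x y => prec α β x y) (fun α => p α) (fun α => q α) := by
    funext α β x y; exact hprec' α β x y
  obtain rfl : succ' = yauTwist (fun α β x y => succ α β x y) (fun α => p α) (fun α => q α) := by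
    funext α β x y; exact hsucc' α β x y
  have hbihom := IsOmegaDendriform.yauTwist (p := fun α => (p α).toAddHom)
    (q := fun α => (q α).toAddHom) ⟨hden1, hden2, hden3⟩ ⟨hpprec, hpsucc⟩ ⟨hqprec, hqsucc⟩ hpq
  exact ⟨hbihom.hom_p.map_prec, hbihom.hom_p.map_succ, hbihom.hom_q.map_prec,
    hbihom.hom_q.map_succ, hbihom.prec_prec, hbihom.succ_prec, hbihom.succ_succ⟩
end

section
/- Let $(A, \prec_{\alpha,\beta}, \succ_{\alpha,\beta}, p_\alpha, q_\alpha)_{\alpha,\beta\in\Omega}$ be a BiHom-$\Omega$-dendriform algebra. Define $x\bullet_{\alpha,\beta}y := x\prec_{\alpha,\beta}y + x\succ_{\alpha,\beta}y$. Then $(A, \bullet_{\alpha,\beta}, p_\alpha, q_\alpha)_{\alpha,\beta\in\Omega}$ is a BiHom-$\Omega$-associative algebra. -/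
section

variable {R M Ω : Type*} [CommSemiring R] [AddCommMonoid M] [Module R M] [Mul Ω]
  (prec succ : Ω → Ω → M →ₗ[R] M →ₗ[R] M)

theorem map_prec_add_succ_of_multiplicative (φ : Ω → M →ₗ[R] M)
    (hprec : ∀ α β x y, φ (α * β) (prec α β x y) = prec α β (φ α x) (φ β y))
    (hsucc : ∀ α β x y, φ (α * β) (succ α β x y) = succ α β (φ α x) (φ β y))
    (α β : Ω) (x y : M) :
    φ (α * β) (prec α β x y + succ α β x y)
      = prec α β (φ α x) (φ β y) + succ α β (φ α x) (φ β y) := by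
  rw [map_add, hprec, hsucc]

/-- The three dendriform axioms are the three pieces of associativity of `prec + succ`:
the left-hand sides of `hden1` and `hden2` and the right-hand side of `hden3` add up to
`(x • y) • q z`, the other sides to `p x • (y • z)`. -/
theorem prec_add_succ_assoc_of_dendriform (p q : Ω → M →ₗ[R] M)
    (hden1 : ∀ α β γ x y z, prec (α * β) γ (prec α β x y) (q γ z)
        = prec α (β * γ) (p α x) (prec β γ y z + succ β γ y z))
    (hden2 : ∀ α β γ x y z,
      prec (α * β) γ (succ α β x y) (q γ z) = succ α (β * γ) (p α x) (prec β γ y z))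
    (hden3 : ∀ α β γ x y z, succ α (β * γ) (p α x) (succ β γ y z)
        = succ (α * β) γ (prec α β x y + succ α β x y) (q γ z))
    (α β γ : Ω) (x y z : M) :
    prec α (β * γ) (p α x) (prec β γ y z + succ β γ y z)
        + succ α (β * γ) (p α x) (prec β γ y z + succ β γ y z)
      = prec (α * β) γ (prec α β x y + succ α β x y) (q γ z)
        + succ (α * β) γ (prec α β x y + succ α β x y) (q γ z) := by
  rw [map_add (succ α (β * γ) (p α x)), hden3, map_add (prec (α * β) γ), LinearMap.add_apply,
    hden1, hden2]
  abel

end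

theorem stmt_4_general
    {K : Type*} [Field K] {Ω : Type*} [Semigroup Ω]
    {A : Type*} [AddCommGroup A] [Module K A]
    (prec succ : Ω → Ω → A →ₗ[K] A →ₗ[K] A)
    (p q : Ω → A →ₗ[K] A)
    -- multiplicativity
    (hpprec : ∀ (α β : Ω) (x y : A), p (α * β) (prec α β x y) = prec α β (p α x) (p β y))
    (hpsucc : ∀ (α β : Ω) (x y : A), p (α * β) (succ α β x y) = succ α β (p α x) (p β y))
    (hqprec : ∀ (α β : Ω) (x y : A), q (α * β) (prec α β x y) = prec α β (q α x) (q β y))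
    (hqsucc : ∀ (α β : Ω) (x y : A), q (α * β) (succ α β x y) = succ α β (q α x) (q β y))
    -- BiHom-Ω-dendriform axioms
    (hden1 : ∀ (α β γ : Ω) (x y z : A),
      prec (α * β) γ (prec α β x y) (q γ z)
        = prec α (β * γ) (p α x) (prec β γ y z + succ β γ y z))
    (hden2 : ∀ (α β γ : Ω) (x y z : A),
      prec (α * β) γ (succ α β x y) (q γ z) = succ α (β * γ) (p α x) (prec β γ y z))
    (hden3 : ∀ (α β γ : Ω) (x y z : A),
      succ α (β * γ) (p α x) (succ β γ y z)
        = succ (α * β) γ (prec α β x y + succ α β x y) (q γ z))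
    -- the sum operation
    (bull : Ω → Ω → A → A → A)
    (hbull : ∀ (α β : Ω) (x y : A), bull α β x y = prec α β x y + succ α β x y) :
    -- (A, bull, p, q) is a BiHom-Ω-associative algebra
    (∀ (α β : Ω) (x y : A), p (α * β) (bull α β x y) = bull α β (p α x) (p β y)) ∧
    (∀ (α β : Ω) (x y : A), q (α * β) (bull α β x y) = bull α β (q α x) (q β y)) ∧
    (∀ (α β γ : Ω) (x y z : A),
      bull α (β * γ) (p α x) (bull β γ y z) = bull (α * β) γ (bull α β x y) (q γ z)) := by
  simp only [hbull]
  exact ⟨map_prec_add_succ_of_multiplicative prec succ p hpprec hpsucc,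
    map_prec_add_succ_of_multiplicative prec succ q hqprec hqsucc,
    prec_add_succ_assoc_of_dendriform prec succ p q hden1 hden2 hden3⟩

/-- A BiHom-Ω-dendriform algebra gives a BiHom-Ω-associative algebra via x•y = x≺y + x≻y. -/
theorem stmt_4
    {K : Type*} [Field K] {Ω : Type*} [Semigroup Ω]
    {A : Type*} [AddCommGroup A] [Module K A]
    (prec succ : Ω → Ω → A →ₗ[K] A →ₗ[K] A)
    (p q : Ω → A →ₗ[K] A)
    -- the families commute
    (hpq : ∀ (α : Ω) (x : A), p α (q α x) = q α (p α x))
    -- multiplicativity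
    (hpprec : ∀ (α β : Ω) (x y : A), p (α * β) (prec α β x y) = prec α β (p α x) (p β y))
    (hpsucc : ∀ (α β : Ω) (x y : A), p (α * β) (succ α β x y) = succ α β (p α x) (p β y))
    (hqprec : ∀ (α β : Ω) (x y : A), q (α * β) (prec α β x y) = prec α β (q α x) (q β y))
    (hqsucc : ∀ (α β : Ω) (x y : A), q (α * β) (succ α β x y) = succ α β (q α x) (q β y))
    -- BiHom-Ω-dendriform axioms
    (hden1 : ∀ (α β γ : Ω) (x y z : A),
      prec (α * β) γ (prec α β x y) (q γ z)
        = prec α (β * γ) (p α x) (prec β γ y z + succ β γ y z))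
    (hden2 : ∀ (α β γ : Ω) (x y z : A),
      prec (α * β) γ (succ α β x y) (q γ z) = succ α (β * γ) (p α x) (prec β γ y z))
    (hden3 : ∀ (α β γ : Ω) (x y z : A),
      succ α (β * γ) (p α x) (succ β γ y z)
        = succ (α * β) γ (prec α β x y + succ α β x y) (q γ z))
    -- the sum operation
    (bull : Ω → Ω → A → A → A)
    (hbull : ∀ (α β : Ω) (x y : A), bull α β x y = prec α β x y + succ α β x y) :
    -- (A, bull, p, q) is a BiHom-Ω-associative algebra
    (∀ (α β : Ω) (x y : A), p (α * β) (bull α β x y) = bull α β (p α x) (p β y)) ∧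
    (∀ (α β : Ω) (x y : A), q (α * β) (bull α β x y) = bull α β (q α x) (q β y)) ∧
    (∀ (α β γ : Ω) (x y z : A),
      bull α (β * γ) (p α x) (bull β γ y z) = bull (α * β) γ (bull α β x y) (q γ z)) :=
  stmt_4_general prec succ p q hpprec hpsucc hqprec hqsucc hden1 hden2 hden3 bull hbull
end

section
/- Let $(A, \bullet_{\alpha,\beta}, p_\alpha, q_\alpha)_{\alpha,\beta\in\Omega}$ be a BiHom-$\Omega$-associative algebra and let $(R_\alpha)_{\alpha\in\Omega}$ be a Rota-Baxter family of weight $0$ on $A$ commuting with $p_\alpha$ and $q_\alpha$. Define $x\prec_{\alpha,\beta}y := x\bullet_{\alpha,\beta}R_\beta(y)$ and $x\succ_{\alpha,\beta}y := R_\alpha(x)\bullet_{\alpha,\beta}y$. Then $(A, \prec_{\alpha,\beta}, \succ_{\alpha,\beta}, p_\alpha, q_\alpha)_{\alpha,\beta\in\Omega}$ is a BiHom-$\Omega$-dendriform algebra. -/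
/-!
The dendriform operations `x ≺ y = x • R y` and `x ≻ y = R x • y` inherit multiplicativity from
`•` because `R` commutes with `p` and `q`. Each dendriform axiom is one application of
BiHom-associativity, moving `p` or `q` across `R`; the two outer axioms additionally use the
Rota-Baxter identity to fold `R y • R z` (resp. `R x • R y`) into `R (y ≺ z + y ≻ z)`
(resp. `R (x ≺ y + x ≻ y)`).
-/

section RotaBaxterFamily

variable {Ω A : Type*} [Mul Ω] (mul : Ω → Ω → A → A → A) (R : Ω → A → A)

theorem map_mul_apply_right_of_commute {f : Ω → A → A}
    (hf : ∀ α β x y, f (α * β) (mul α β x y) = mul α β (f α x) (f β y))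
    (hRf : ∀ α x, R α (f α x) = f α (R α x)) (α β : Ω) (x y : A) :
    f (α * β) (mul α β x (R β y)) = mul α β (f α x) (R β (f β y)) := by
  rw [hf, hRf]

theorem map_mul_apply_left_of_commute {f : Ω → A → A}
    (hf : ∀ α β x y, f (α * β) (mul α β x y) = mul α β (f α x) (f β y))
    (hRf : ∀ α x, R α (f α x) = f α (R α x)) (α β : Ω) (x y : A) :
    f (α * β) (mul α β (R α x) y) = mul α β (R α (f α x)) (f β y) := by
  rw [hf, hRf]

variable {mul R} {p q : Ω → A → A}

theorem dendriform_middle_of_rotaBaxter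
    (hassoc : ∀ α β γ x y z,
      mul α (β * γ) (p α x) (mul β γ y z) = mul (α * β) γ (mul α β x y) (q γ z))
    (hRp : ∀ α x, R α (p α x) = p α (R α x)) (hRq : ∀ α x, R α (q α x) = q α (R α x))
    (α β γ : Ω) (x y z : A) :
    mul (α * β) γ (mul α β (R α x) y) (R γ (q γ z))
      = mul α (β * γ) (R α (p α x)) (mul β γ y (R γ z)) := by
  rw [hRq, ← hassoc, hRp]

variable [AddCommMagma A]

theorem dendriform_left_of_rotaBaxter
    (hassoc : ∀ α β γ x y z,
      mul α (β * γ) (p α x) (mul β γ y z) = mul (α * β) γ (mul α β x y) (q γ z))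
    (hRB : ∀ α β x y,
      mul α β (R α x) (R β y) = R (α * β) (mul α β (R α x) y + mul α β x (R β y)))
    (hRq : ∀ α x, R α (q α x) = q α (R α x)) (α β γ : Ω) (x y z : A) :
    mul (α * β) γ (mul α β x (R β y)) (R γ (q γ z))
      = mul α (β * γ) (p α x) (R (β * γ) (mul β γ y (R γ z) + mul β γ (R β y) z)) := by
  rw [hRq, ← hassoc, hRB, add_comm]

theorem dendriform_right_of_rotaBaxter
    (hassoc : ∀ α β γ x y z,
      mul α (β * γ) (p α x) (mul β γ y z) = mul (α * β) γ (mul α β x y) (q γ z))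
    (hRB : ∀ α β x y,
      mul α β (R α x) (R β y) = R (α * β) (mul α β (R α x) y + mul α β x (R β y)))
    (hRp : ∀ α x, R α (p α x) = p α (R α x)) (α β γ : Ω) (x y z : A) :
    mul α (β * γ) (R α (p α x)) (mul β γ (R β y) z)
      = mul (α * β) γ (R (α * β) (mul α β x (R β y) + mul α β (R α x) y)) (q γ z) := by
  rw [hRp, hassoc, hRB, add_comm]

end RotaBaxterFamily

theorem stmt_5_general
    {K : Type*} [Field K] {Ω : Type*} [Semigroup Ω]
    {A : Type*} [AddCommGroup A] [Module K A]
    (mul : Ω → Ω → A →ₗ[K] A →ₗ[K] A)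
    (p q : Ω → A →ₗ[K] A)
    -- (A, mul, p, q) is a BiHom-Ω-associative algebra
    (hp : ∀ (α β : Ω) (x y : A), p (α * β) (mul α β x y) = mul α β (p α x) (p β y))
    (hq : ∀ (α β : Ω) (x y : A), q (α * β) (mul α β x y) = mul α β (q α x) (q β y))
    (hassoc : ∀ (α β γ : Ω) (x y z : A),
      mul α (β * γ) (p α x) (mul β γ y z) = mul (α * β) γ (mul α β x y) (q γ z))
    -- (R_α) is a Rota-Baxter family of weight 0, commuting with p and q
    (R : Ω → A →ₗ[K] A)
    (hRB : ∀ (α β : Ω) (x y : A),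
      mul α β (R α x) (R β y) = R (α * β) (mul α β (R α x) y + mul α β x (R β y)))
    (hRp : ∀ (α : Ω) (x : A), R α (p α x) = p α (R α x))
    (hRq : ∀ (α : Ω) (x : A), R α (q α x) = q α (R α x))
    -- the induced operations
    (prec succ : Ω → Ω → A → A → A)
    (hprec : ∀ (α β : Ω) (x y : A), prec α β x y = mul α β x (R β y))
    (hsucc : ∀ (α β : Ω) (x y : A), succ α β x y = mul α β (R α x) y) :
    -- (A, prec, succ, p, q) is a BiHom-Ω-dendriform algebra
    (∀ (α β : Ω) (x y : A), p (α * β) (prec α β x y) = prec α β (p α x) (p β y)) ∧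
    (∀ (α β : Ω) (x y : A), p (α * β) (succ α β x y) = succ α β (p α x) (p β y)) ∧
    (∀ (α β : Ω) (x y : A), q (α * β) (prec α β x y) = prec α β (q α x) (q β y)) ∧
    (∀ (α β : Ω) (x y : A), q (α * β) (succ α β x y) = succ α β (q α x) (q β y)) ∧
    (∀ (α β γ : Ω) (x y z : A),
      prec (α * β) γ (prec α β x y) (q γ z)
        = prec α (β * γ) (p α x) (prec β γ y z + succ β γ y z)) ∧
    (∀ (α β γ : Ω) (x y z : A),
      prec (α * β) γ (succ α β x y) (q γ z) = succ α (β * γ) (p α x) (prec β γ y z)) ∧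
    (∀ (α β γ : Ω) (x y z : A),
      succ α (β * γ) (p α x) (succ β γ y z)
        = succ (α * β) γ (prec α β x y + succ α β x y) (q γ z)) := by
  obtain rfl : prec = fun α β x y => mul α β x (R β y) := by
    funext α β x y; exact hprec α β x y
  obtain rfl : succ = fun α β x y => mul α β (R α x) y := by
    funext α β x y; exact hsucc α β x y
  exact ⟨map_mul_apply_right_of_commute _ _ hp hRp, map_mul_apply_left_of_commute _ _ hp hRp,
    map_mul_apply_right_of_commute _ _ hq hRq, map_mul_apply_left_of_commute _ _ hq hRq,
    dendriform_left_of_rotaBaxter hassoc hRB hRq, dendriform_middle_of_rotaBaxter hassoc hRp hRq,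
    dendriform_right_of_rotaBaxter hassoc hRB hRp⟩

/-- A Rota-Baxter family of weight 0 on a BiHom-Ω-associative algebra induces a
BiHom-Ω-dendriform algebra. -/
theorem stmt_5
    {K : Type*} [Field K] {Ω : Type*} [Semigroup Ω]
    {A : Type*} [AddCommGroup A] [Module K A]
    (mul : Ω → Ω → A →ₗ[K] A →ₗ[K] A)
    (p q : Ω → A →ₗ[K] A)
    -- (A, mul, p, q) is a BiHom-Ω-associative algebra
    (hp : ∀ (α β : Ω) (x y : A), p (α * β) (mul α β x y) = mul α β (p α x) (p β y))
    (hq : ∀ (α β : Ω) (x y : A), q (α * β) (mul α β x y) = mul α β (q α x) (q β y))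
    (hpq : ∀ (α : Ω) (x : A), p α (q α x) = q α (p α x))
    (hassoc : ∀ (α β γ : Ω) (x y z : A),
      mul α (β * γ) (p α x) (mul β γ y z) = mul (α * β) γ (mul α β x y) (q γ z))
    -- (R_α) is a Rota-Baxter family of weight 0, commuting with p and q
    (R : Ω → A →ₗ[K] A)
    (hRB : ∀ (α β : Ω) (x y : A),
      mul α β (R α x) (R β y) = R (α * β) (mul α β (R α x) y + mul α β x (R β y)))
    (hRp : ∀ (α : Ω) (x : A), R α (p α x) = p α (R α x))
    (hRq : ∀ (α : Ω) (x : A), R α (q α x) = q α (R α x))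
    -- the induced operations
    (prec succ : Ω → Ω → A → A → A)
    (hprec : ∀ (α β : Ω) (x y : A), prec α β x y = mul α β x (R β y))
    (hsucc : ∀ (α β : Ω) (x y : A), succ α β x y = mul α β (R α x) y) :
    -- (A, prec, succ, p, q) is a BiHom-Ω-dendriform algebra
    (∀ (α β : Ω) (x y : A), p (α * β) (prec α β x y) = prec α β (p α x) (p β y)) ∧
    (∀ (α β : Ω) (x y : A), p (α * β) (succ α β x y) = succ α β (p α x) (p β y)) ∧
    (∀ (α β : Ω) (x y : A), q (α * β) (prec α β x y) = prec α β (q α x) (q β y)) ∧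
    (∀ (α β : Ω) (x y : A), q (α * β) (succ α β x y) = succ α β (q α x) (q β y)) ∧
    (∀ (α β γ : Ω) (x y z : A),
      prec (α * β) γ (prec α β x y) (q γ z)
        = prec α (β * γ) (p α x) (prec β γ y z + succ β γ y z)) ∧
    (∀ (α β γ : Ω) (x y z : A),
      prec (α * β) γ (succ α β x y) (q γ z) = succ α (β * γ) (p α x) (prec β γ y z)) ∧
    (∀ (α β γ : Ω) (x y z : A),
      succ α (β * γ) (p α x) (succ β γ y z)
        = succ (α * β) γ (prec α β x y + succ α β x y) (q γ z)) :=
  stmt_5_general mul p q hp hq hassoc R hRB hRp hRq prec succ hprec hsucc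
end

section
/- Let $(A, \bullet_{\alpha,\beta}, p_\alpha, q_\alpha)_{\alpha,\beta\in\Omega}$ be a BiHom-$\Omega$-associative algebra and let $(R_\alpha)_{\alpha\in\Omega}$ be a Rota-Baxter family of weight $\lambda$ on $A$ commuting with $p_\alpha$ and $q_\alpha$. Define $x\prec'_{\alpha,\beta}y := x\bullet_{\alpha,\beta}R_\beta(y) + \lambda\, x\bullet_{\alpha,\beta}y$ and $x\succ'_{\alpha,\beta}y := R_\alpha(x)\bullet_{\alpha,\beta}y$. Then $(A, \prec'_{\alpha,\beta}, \succ'_{\alpha,\beta}, p_\alpha, q_\alpha)_{\alpha,\beta\in\Omega}$ is a BiHom-$\Omega$-dendriform algebra. -/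
/-!
Every dendriform axiom reduces, after unfolding `≺'` and `≻'`, to BiHom-associativity once
`p_α` and `q_γ` have been moved past the `R`'s. The two axioms that contain `R_β(y) • R_γ(z)`
(hidden in `≺' + ≻'`) also need the Rota-Baxter identity in the form
`R_{αβ}(x ≺' y + x ≻' y) = R_α(x) • R_β(y)`.
-/

namespace RotaBaxterFamily

variable {K Ω A : Type*} [CommRing K] [Semigroup Ω] [AddCommGroup A] [Module K A]

/-- The operation `x ≺'_{α,β} y`. -/
def prec (mul : Ω → Ω → A →ₗ[K] A →ₗ[K] A) (R : Ω → A →ₗ[K] A) (lam : K)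
    (α β : Ω) (x y : A) : A :=
  mul α β x (R β y) + lam • mul α β x y

/-- The operation `x ≻'_{α,β} y`. -/
def succ (mul : Ω → Ω → A →ₗ[K] A →ₗ[K] A) (R : Ω → A →ₗ[K] A)
    (α β : Ω) (x y : A) : A :=
  mul α β (R α x) y

variable {mul : Ω → Ω → A →ₗ[K] A →ₗ[K] A} {R : Ω → A →ₗ[K] A} {lam : K}

theorem map_prec {f : Ω → A →ₗ[K] A}
    (hf : ∀ α β x y, f (α * β) (mul α β x y) = mul α β (f α x) (f β y))
    (hRf : ∀ α x, R α (f α x) = f α (R α x)) (α β : Ω) (x y : A) :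
    f (α * β) (prec mul R lam α β x y) = prec mul R lam α β (f α x) (f β y) := by
  simp only [prec, map_add, map_smul, hf, hRf]

theorem map_succ {f : Ω → A →ₗ[K] A}
    (hf : ∀ α β x y, f (α * β) (mul α β x y) = mul α β (f α x) (f β y))
    (hRf : ∀ α x, R α (f α x) = f α (R α x)) (α β : Ω) (x y : A) :
    f (α * β) (succ mul R α β x y) = succ mul R α β (f α x) (f β y) := by
  simp only [succ, hf, hRf]

theorem apply_prec_add_succ
    (hRB : ∀ α β x y, mul α β (R α x) (R β y)
      = R (α * β) (mul α β (R α x) y + mul α β x (R β y) + lam • mul α β x y))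
    (α β : Ω) (x y : A) :
    R (α * β) (prec mul R lam α β x y + succ mul R α β x y) = mul α β (R α x) (R β y) := by
  rw [hRB, prec, succ]
  congr 1
  abel

variable {p q : Ω → A →ₗ[K] A}

theorem prec_prec
    (hassoc : ∀ α β γ x y z,
      mul α (β * γ) (p α x) (mul β γ y z) = mul (α * β) γ (mul α β x y) (q γ z))
    (hRB : ∀ α β x y, mul α β (R α x) (R β y)
      = R (α * β) (mul α β (R α x) y + mul α β x (R β y) + lam • mul α β x y))
    (hRq : ∀ α x, R α (q α x) = q α (R α x)) (α β γ : Ω) (x y z : A) :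
    prec mul R lam (α * β) γ (prec mul R lam α β x y) (q γ z)
      = prec mul R lam α (β * γ) (p α x) (prec mul R lam β γ y z + succ mul R β γ y z) := by
  conv_rhs => rw [prec, apply_prec_add_succ hRB]
  simp only [prec, succ, map_add, map_smul, LinearMap.add_apply, LinearMap.smul_apply, hassoc,
    hRq]
  module

theorem succ_prec
    (hassoc : ∀ α β γ x y z,
      mul α (β * γ) (p α x) (mul β γ y z) = mul (α * β) γ (mul α β x y) (q γ z))
    (hRp : ∀ α x, R α (p α x) = p α (R α x)) (hRq : ∀ α x, R α (q α x) = q α (R α x))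
    (α β γ : Ω) (x y z : A) :
    prec mul R lam (α * β) γ (succ mul R α β x y) (q γ z)
      = succ mul R α (β * γ) (p α x) (prec mul R lam β γ y z) := by
  simp only [prec, succ, map_add, map_smul, hRp, hRq, hassoc]

theorem succ_succ
    (hassoc : ∀ α β γ x y z,
      mul α (β * γ) (p α x) (mul β γ y z) = mul (α * β) γ (mul α β x y) (q γ z))
    (hRB : ∀ α β x y, mul α β (R α x) (R β y)
      = R (α * β) (mul α β (R α x) y + mul α β x (R β y) + lam • mul α β x y))
    (hRp : ∀ α x, R α (p α x) = p α (R α x)) (α β γ : Ω) (x y z : A) :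
    succ mul R α (β * γ) (p α x) (succ mul R β γ y z)
      = succ mul R (α * β) γ (prec mul R lam α β x y + succ mul R α β x y) (q γ z) := by
  conv_rhs => rw [succ, apply_prec_add_succ hRB]
  simp only [succ, hRp, hassoc]

end RotaBaxterFamily

open RotaBaxterFamily in
theorem stmt_6_general
    {K : Type*} [Field K] {Ω : Type*} [Semigroup Ω]
    {A : Type*} [AddCommGroup A] [Module K A]
    (mul : Ω → Ω → A →ₗ[K] A →ₗ[K] A)
    (p q : Ω → A →ₗ[K] A)
    (lam : K)
    -- (A, mul, p, q) is a BiHom-Ω-associative algebra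
    (hp : ∀ (α β : Ω) (x y : A), p (α * β) (mul α β x y) = mul α β (p α x) (p β y))
    (hq : ∀ (α β : Ω) (x y : A), q (α * β) (mul α β x y) = mul α β (q α x) (q β y))
    (hassoc : ∀ (α β γ : Ω) (x y z : A),
      mul α (β * γ) (p α x) (mul β γ y z) = mul (α * β) γ (mul α β x y) (q γ z))
    -- (R_α) is a Rota-Baxter family of weight 0, commuting with p and q
    (R : Ω → A →ₗ[K] A)
    (hRB : ∀ (α β : Ω) (x y : A),
      mul α β (R α x) (R β y) = R (α * β) (mul α β (R α x) y + mul α β x (R β y) + lam • mul α β x y))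
    (hRp : ∀ (α : Ω) (x : A), R α (p α x) = p α (R α x))
    (hRq : ∀ (α : Ω) (x : A), R α (q α x) = q α (R α x))
    -- the induced operations
    (prec succ : Ω → Ω → A → A → A)
    (hprec : ∀ (α β : Ω) (x y : A), prec α β x y = mul α β x (R β y) + lam • mul α β x y)
    (hsucc : ∀ (α β : Ω) (x y : A), succ α β x y = mul α β (R α x) y) :
    -- (A, prec, succ, p, q) is a BiHom-Ω-dendriform algebra
    (∀ (α β : Ω) (x y : A), p (α * β) (prec α β x y) = prec α β (p α x) (p β y)) ∧
    (∀ (α β : Ω) (x y : A), p (α * β) (succ α β x y) = succ α β (p α x) (p β y)) ∧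
    (∀ (α β : Ω) (x y : A), q (α * β) (prec α β x y) = prec α β (q α x) (q β y)) ∧
    (∀ (α β : Ω) (x y : A), q (α * β) (succ α β x y) = succ α β (q α x) (q β y)) ∧
    (∀ (α β γ : Ω) (x y z : A),
      prec (α * β) γ (prec α β x y) (q γ z)
        = prec α (β * γ) (p α x) (prec β γ y z + succ β γ y z)) ∧
    (∀ (α β γ : Ω) (x y z : A),
      prec (α * β) γ (succ α β x y) (q γ z) = succ α (β * γ) (p α x) (prec β γ y z)) ∧
    (∀ (α β γ : Ω) (x y z : A),
      succ α (β * γ) (p α x) (succ β γ y z)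
        = succ (α * β) γ (prec α β x y + succ α β x y) (q γ z)) := by
  obtain rfl : prec = RotaBaxterFamily.prec mul R lam := by
    funext α β x y
    exact hprec α β x y
  obtain rfl : succ = RotaBaxterFamily.succ mul R := by
    funext α β x y
    exact hsucc α β x y
  exact ⟨map_prec hp hRp, map_succ hp hRp, map_prec hq hRq, map_succ hq hRq,
    prec_prec hassoc hRB hRq, succ_prec hassoc hRp hRq, succ_succ hassoc hRB hRp⟩

/-- A Rota-Baxter family of weight λ on a BiHom-Ω-associative algebra induces a
BiHom-Ω-dendriform algebra. -/
theorem stmt_6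
    {K : Type*} [Field K] {Ω : Type*} [Semigroup Ω]
    {A : Type*} [AddCommGroup A] [Module K A]
    (mul : Ω → Ω → A →ₗ[K] A →ₗ[K] A)
    (p q : Ω → A →ₗ[K] A)
    (lam : K)
    -- (A, mul, p, q) is a BiHom-Ω-associative algebra
    (hp : ∀ (α β : Ω) (x y : A), p (α * β) (mul α β x y) = mul α β (p α x) (p β y))
    (hq : ∀ (α β : Ω) (x y : A), q (α * β) (mul α β x y) = mul α β (q α x) (q β y))
    (hpq : ∀ (α : Ω) (x : A), p α (q α x) = q α (p α x))
    (hassoc : ∀ (α β γ : Ω) (x y z : A),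
      mul α (β * γ) (p α x) (mul β γ y z) = mul (α * β) γ (mul α β x y) (q γ z))
    -- (R_α) is a Rota-Baxter family of weight 0, commuting with p and q
    (R : Ω → A →ₗ[K] A)
    (hRB : ∀ (α β : Ω) (x y : A),
      mul α β (R α x) (R β y) = R (α * β) (mul α β (R α x) y + mul α β x (R β y) + lam • mul α β x y))
    (hRp : ∀ (α : Ω) (x : A), R α (p α x) = p α (R α x))
    (hRq : ∀ (α : Ω) (x : A), R α (q α x) = q α (R α x))
    -- the induced operations
    (prec succ : Ω → Ω → A → A → A)
    (hprec : ∀ (α β : Ω) (x y : A), prec α β x y = mul α β x (R β y) + lam • mul α β x y)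
    (hsucc : ∀ (α β : Ω) (x y : A), succ α β x y = mul α β (R α x) y) :
    -- (A, prec, succ, p, q) is a BiHom-Ω-dendriform algebra
    (∀ (α β : Ω) (x y : A), p (α * β) (prec α β x y) = prec α β (p α x) (p β y)) ∧
    (∀ (α β : Ω) (x y : A), p (α * β) (succ α β x y) = succ α β (p α x) (p β y)) ∧
    (∀ (α β : Ω) (x y : A), q (α * β) (prec α β x y) = prec α β (q α x) (q β y)) ∧
    (∀ (α β : Ω) (x y : A), q (α * β) (succ α β x y) = succ α β (q α x) (q β y)) ∧
    (∀ (α β γ : Ω) (x y z : A),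
      prec (α * β) γ (prec α β x y) (q γ z)
        = prec α (β * γ) (p α x) (prec β γ y z + succ β γ y z)) ∧
    (∀ (α β γ : Ω) (x y z : A),
      prec (α * β) γ (succ α β x y) (q γ z) = succ α (β * γ) (p α x) (prec β γ y z)) ∧
    (∀ (α β γ : Ω) (x y z : A),
      succ α (β * γ) (p α x) (succ β γ y z)
        = succ (α * β) γ (prec α β x y + succ α β x y) (q γ z)) :=
  stmt_6_general mul p q lam hp hq hassoc R hRB hRp hRq prec succ hprec hsucc
end

section
/- Let $\Omega$ be a commutative semigroup, $(A, \rhd_{\alpha,\beta})_{\alpha,\beta\in\Omega}$ an $\Omega$-pre-Lie algebra, and $p_\alpha, q_\alpha: A\to A$ two commuting families of $\Omega$-pre-Lie algebra morphisms. Define $x\blacktriangleright_{\alpha,\beta}y := p_\alpha(x)\rhd_{\alpha,\beta}q_\beta(y)$. Then $(A, \blacktriangleright_{\alpha,\beta}, p_\alpha, q_\alpha)_{\alpha,\beta\in\Omega}$ is a BiHom-$\Omega$-pre-Lie algebra. -/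
/-! Pushing `p` and `q` inwards with the morphism property and `p_α q_α = q_α p_α`, every nested twisted
product becomes a nested `▷`-product of `p_α p_α q_α x`, `p_β p_β q_β y` and `q_γ q_γ z`, so the BiHom
identity is the Ω-pre-Lie identity evaluated at these three elements. -/

namespace OmegaPreLie

variable {K Ω A : Type*} [CommSemiring K] [Mul Ω]

def IsHom [AddCommMonoid A] [Module K A] (pre : Ω → Ω → A →ₗ[K] A →ₗ[K] A)
    (f : Ω → A →ₗ[K] A) : Prop :=
  ∀ (α β : Ω) (x y : A), f (α * β) (pre α β x y) = pre α β (f α x) (f β y)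

def yauTwist [AddCommMonoid A] [Module K A] (pre : Ω → Ω → A →ₗ[K] A →ₗ[K] A)
    (p q : Ω → A →ₗ[K] A) (α β : Ω) (x y : A) : A :=
  pre α β (p α x) (q β y)

section AddCommMonoid

variable [AddCommMonoid A] [Module K A] {pre : Ω → Ω → A →ₗ[K] A →ₗ[K] A} {p q : Ω → A →ₗ[K] A}

theorem IsHom.yauTwist_map {f : Ω → A →ₗ[K] A} (hf : IsHom pre f)
    (hfp : ∀ (α : Ω) (x : A), f α (p α x) = p α (f α x))
    (hfq : ∀ (α : Ω) (x : A), f α (q α x) = q α (f α x)) (α β : Ω) (x y : A) :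
    f (α * β) (yauTwist pre p q α β x y) = yauTwist pre p q α β (f α x) (f β y) := by
  rw [yauTwist, hf, hfp, hfq, yauTwist]

theorem yauTwist_assoc_left (hp : IsHom pre p) (hpq : ∀ (α : Ω) (x : A), p α (q α x) = q α (p α x))
    (α β γ : Ω) (x y z : A) :
    yauTwist pre p q (α * β) γ (yauTwist pre p q α β (q α x) (p β y)) (q γ z)
      = pre (α * β) γ (pre α β (p α (p α (q α x))) (p β (p β (q β y)))) (q γ (q γ z)) := by
  simp only [yauTwist, hp _ _, hpq]

theorem yauTwist_assoc_right (hq : IsHom pre q) (hpq : ∀ (α : Ω) (x : A), p α (q α x) = q α (p α x))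
    (α β γ : Ω) (x y z : A) :
    yauTwist pre p q α (β * γ) (p α (q α x)) (yauTwist pre p q β γ (p β y) z)
      = pre α (β * γ) (p α (p α (q α x))) (pre β γ (p β (p β (q β y))) (q γ (q γ z))) := by
  simp only [yauTwist, hq _ _, hpq]

end AddCommMonoid

theorem yauTwist_biHom_preLie [AddCommGroup A] [Module K A]
    {pre : Ω → Ω → A →ₗ[K] A →ₗ[K] A} {p q : Ω → A →ₗ[K] A}
    (hpre : ∀ (α β γ : Ω) (x y z : A),
      pre α (β * γ) x (pre β γ y z) - pre (α * β) γ (pre α β x y) z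
        = pre β (α * γ) y (pre α γ x z) - pre (β * α) γ (pre β α y x) z)
    (hp : IsHom pre p) (hq : IsHom pre q) (hpq : ∀ (α : Ω) (x : A), p α (q α x) = q α (p α x))
    (α β γ : Ω) (x y z : A) :
    yauTwist pre p q α (β * γ) (p α (q α x)) (yauTwist pre p q β γ (p β y) z)
        - yauTwist pre p q (α * β) γ (yauTwist pre p q α β (q α x) (p β y)) (q γ z)
      = yauTwist pre p q β (α * γ) (p β (q β y)) (yauTwist pre p q α γ (p α x) z)
        - yauTwist pre p q (β * α) γ (yauTwist pre p q β α (q β y) (p α x)) (q γ z) := by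
  simp only [yauTwist_assoc_left hp hpq, yauTwist_assoc_right hq hpq]
  exact hpre α β γ _ _ _

end OmegaPreLie

open OmegaPreLie in
/-- Yau twist of an Ω-pre-Lie algebra gives a BiHom-Ω-pre-Lie algebra. -/
theorem stmt_7
    {K : Type*} [Field K] {Ω : Type*} [CommSemigroup Ω]
    {A : Type*} [AddCommGroup A] [Module K A]
    (pre : Ω → Ω → A →ₗ[K] A →ₗ[K] A)
    (p q : Ω → A →ₗ[K] A)
    -- Ω-pre-Lie identity
    (hpre : ∀ (α β γ : Ω) (x y z : A),
      pre α (β * γ) x (pre β γ y z) - pre (α * β) γ (pre α β x y) z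
        = pre β (α * γ) y (pre α γ x z) - pre (β * α) γ (pre β α y x) z)
    -- p, q are Ω-pre-Lie algebra morphisms
    (hp : ∀ (α β : Ω) (x y : A), p (α * β) (pre α β x y) = pre α β (p α x) (p β y))
    (hq : ∀ (α β : Ω) (x y : A), q (α * β) (pre α β x y) = pre α β (q α x) (q β y))
    -- the families commute
    (hpq : ∀ (α : Ω) (x : A), p α (q α x) = q α (p α x))
    -- the twisted operation
    (ob : Ω → Ω → A → A → A)
    (hob : ∀ (α β : Ω) (x y : A), ob α β x y = pre α β (p α x) (q β y)) :
    -- (A, ob, p, q) is a BiHom-Ω-pre-Lie algebra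
    (∀ (α β : Ω) (x y : A), p (α * β) (ob α β x y) = ob α β (p α x) (p β y)) ∧
    (∀ (α β : Ω) (x y : A), q (α * β) (ob α β x y) = ob α β (q α x) (q β y)) ∧
    (∀ (α β γ : Ω) (x y z : A),
      ob α (β * γ) (p α (q α x)) (ob β γ (p β y) z)
          - ob (α * β) γ (ob α β (q α x) (p β y)) (q γ z)
        = ob β (α * γ) (p β (q β y)) (ob α γ (p α x) z)
          - ob (β * α) γ (ob β α (q β y) (p α x)) (q γ z)) := by
  obtain rfl : ob = yauTwist pre p q := by
    funext α β x y
    exact hob α β x y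
  have hqp (α : Ω) (x : A) : q α (p α x) = p α (q α x) := (hpq α x).symm
  exact ⟨IsHom.yauTwist_map hp (fun _ _ => rfl) hpq,
    IsHom.yauTwist_map hq hqp (fun _ _ => rfl),
    yauTwist_biHom_preLie hpre hp hq hpq⟩
end

section
/- Let $\Omega$ be a commutative semigroup and $(A, \prec_{\alpha,\beta}, \succ_{\alpha,\beta}, p_\alpha, q_\alpha)_{\alpha,\beta\in\Omega}$ a BiHom-$\Omega$-dendriform algebra with $p_\alpha, q_\alpha$ bijective. Define $x\blacktriangleright_{\alpha,\beta}y := x\succ_{\alpha,\beta}y - (p_\beta^{-1}q_\beta(y))\prec_{\beta,\alpha}(p_\alpha q_\alpha^{-1}(x))$. Then $(A, \blacktriangleright_{\alpha,\beta}, p_\alpha, q_\alpha)_{\alpha,\beta\in\Omega}$ is a BiHom-$\Omega$-pre-Lie algebra. -/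
/-! Write `x ▸ y = x ≻ y - σ y ≺ τ x` with `σ = p⁻¹ q` and `τ = p q⁻¹`. Expanding the BiHom
associator `p q x ▸ (p y ▸ z) - (q x ▸ p y) ▸ q z` and applying each dendriform axiom once (the
third to the `≻ ≻` term, the second and the first to the two terms of `p q x ▸ (p y ▸ z)` that
involve `≺`) leaves six terms, which are exchanged in pairs by swapping `(α, x)` with `(β, y)`.
So the associator is symmetric in its first two arguments, which is the pre-Lie identity. -/

section Multiplicative

variable {K Ω A : Type*} [CommSemiring K] [AddCommMonoid A] [Module K A]

def IsMultiplicative [Mul Ω] (f : Ω → A ≃ₗ[K] A) (op : Ω → Ω → A →ₗ[K] A →ₗ[K] A) : Prop :=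
  ∀ α β x y, f (α * β) (op α β x y) = op α β (f α x) (f β y)

variable {f : Ω → A ≃ₗ[K] A} {op : Ω → Ω → A →ₗ[K] A →ₗ[K] A}

protected theorem IsMultiplicative.eq [Mul Ω] (h : IsMultiplicative f op) (α β : Ω) (x y : A) :
    f (α * β) (op α β x y) = op α β (f α x) (f β y) :=
  h α β x y

theorem IsMultiplicative.apply_swap [CommMagma Ω] (h : IsMultiplicative f op) (α β : Ω) (x y : A) :
    f (α * β) (op β α x y) = op β α (f β x) (f α y) := by
  rw [mul_comm]
  exact h.eq β α x y

theorem IsMultiplicative.symm_apply [Mul Ω] (h : IsMultiplicative f op) (α β : Ω) (x y : A) :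
    (f (α * β)).symm (op α β x y) = op α β ((f α).symm x) ((f β).symm y) := by
  rw [LinearEquiv.symm_apply_eq, h.eq, LinearEquiv.apply_symm_apply, LinearEquiv.apply_symm_apply]

theorem IsMultiplicative.symm_apply_swap [CommMagma Ω] (h : IsMultiplicative f op) (α β : Ω)
    (x y : A) :
    (f (α * β)).symm (op β α x y) = op β α ((f β).symm x) ((f α).symm y) := by
  rw [mul_comm]
  exact h.symm_apply β α x y

end Multiplicative

structure IsBiHomDendriform {K Ω A : Type*} [CommSemiring K] [Mul Ω] [AddCommMonoid A]
    [Module K A] (prec succ : Ω → Ω → A →ₗ[K] A →ₗ[K] A) (p q : Ω → A ≃ₗ[K] A) : Prop where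
  commute : ∀ α x, p α (q α x) = q α (p α x)
  p_prec : IsMultiplicative p prec
  p_succ : IsMultiplicative p succ
  q_prec : IsMultiplicative q prec
  q_succ : IsMultiplicative q succ
  prec_prec : ∀ α β γ x y z,
    prec (α * β) γ (prec α β x y) (q γ z) = prec α (β * γ) (p α x) (prec β γ y z + succ β γ y z)
  succ_prec : ∀ α β γ x y z,
    prec (α * β) γ (succ α β x y) (q γ z) = succ α (β * γ) (p α x) (prec β γ y z)
  succ_succ : ∀ α β γ x y z,
    succ α (β * γ) (p α x) (succ β γ y z) = succ (α * β) γ (prec α β x y + succ α β x y) (q γ z)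

namespace IsBiHomDendriform

variable {K Ω A : Type*} [CommSemiring K] [Mul Ω] [AddCommMonoid A] [Module K A]
  {prec succ : Ω → Ω → A →ₗ[K] A →ₗ[K] A} {p q : Ω → A ≃ₗ[K] A}

/- Oriented as rewrite rules, these three put every word in `p α`, `q α` and their inverses
into the normal form `p^m q^n`, so that `simp` can cancel inverses. -/

theorem q_p (hD : IsBiHomDendriform prec succ p q) (α : Ω) (x : A) : q α (p α x) = p α (q α x) :=
  (hD.commute α x).symm

theorem q_symm_p (hD : IsBiHomDendriform prec succ p q) (α : Ω) (x : A) :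
    q α ((p α).symm x) = (p α).symm (q α x) := by
  rw [eq_comm, LinearEquiv.symm_apply_eq, hD.commute, LinearEquiv.apply_symm_apply]

theorem symm_q_p (hD : IsBiHomDendriform prec succ p q) (α : Ω) (x : A) :
    (q α).symm (p α x) = p α ((q α).symm x) := by
  rw [LinearEquiv.symm_apply_eq, hD.q_p, LinearEquiv.apply_symm_apply]

end IsBiHomDendriform

section PreLie

variable {K Ω A : Type*} [CommSemiring K] [CommSemigroup Ω] [AddCommGroup A] [Module K A]

def preLieOfDendriform (prec succ : Ω → Ω → A →ₗ[K] A →ₗ[K] A) (p q : Ω → A ≃ₗ[K] A)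
    (α β : Ω) (x y : A) : A :=
  succ α β x y - prec β α ((p β).symm (q β y)) (p α ((q α).symm x))

namespace IsBiHomDendriform

variable {prec succ : Ω → Ω → A →ₗ[K] A →ₗ[K] A} {p q : Ω → A ≃ₗ[K] A}

theorem p_apply_preLieOfDendriform (hD : IsBiHomDendriform prec succ p q) (α β : Ω) (x y : A) :
    p (α * β) (preLieOfDendriform prec succ p q α β x y)
      = preLieOfDendriform prec succ p q α β (p α x) (p β y) := by
  simp only [preLieOfDendriform, map_sub, hD.p_succ.eq, hD.p_prec.apply_swap, hD.q_p,
    hD.symm_q_p, LinearEquiv.apply_symm_apply, LinearEquiv.symm_apply_apply]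

theorem q_apply_preLieOfDendriform (hD : IsBiHomDendriform prec succ p q) (α β : Ω) (x y : A) :
    q (α * β) (preLieOfDendriform prec succ p q α β x y)
      = preLieOfDendriform prec succ p q α β (q α x) (q β y) := by
  simp only [preLieOfDendriform, map_sub, hD.q_succ.eq, hD.q_prec.apply_swap, hD.q_p,
    hD.q_symm_p, LinearEquiv.apply_symm_apply, LinearEquiv.symm_apply_apply]

theorem preLieOfDendriform_associator_left (hD : IsBiHomDendriform prec succ p q) (α β γ : Ω)
    (x y z : A) :
    preLieOfDendriform prec succ p q α (β * γ) (p α (q α x))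
        (preLieOfDendriform prec succ p q β γ (p β y) z)
      = succ α (β * γ) (p α (q α x)) (succ β γ (p β y) z)
        - succ α (β * γ) (p α (q α x))
            (prec γ β ((p γ).symm (q γ z)) (p β (p β ((q β).symm y))))
        - prec (β * γ) α (succ β γ (q β y) ((p γ).symm (q γ z))) (p α (p α x))
        + prec (β * γ) α (prec γ β ((p γ).symm ((p γ).symm (q γ (q γ z)))) (p β y))
            (p α (p α x)) := by
  simp only [preLieOfDendriform, map_sub, LinearMap.sub_apply, hD.q_succ.eq,
    hD.q_prec.apply_swap, hD.p_succ.symm_apply, hD.p_prec.symm_apply_swap, hD.q_p,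
    hD.q_symm_p, hD.symm_q_p, LinearEquiv.apply_symm_apply, LinearEquiv.symm_apply_apply]
  abel

theorem preLieOfDendriform_associator_right (hD : IsBiHomDendriform prec succ p q) (α β γ : Ω)
    (x y z : A) :
    preLieOfDendriform prec succ p q (α * β) γ
        (preLieOfDendriform prec succ p q α β (q α x) (p β y)) (q γ z)
      = succ (α * β) γ (succ α β (q α x) (p β y)) (q γ z)
        - succ (α * β) γ (prec β α (q β y) (p α x)) (q γ z)
        - prec γ (α * β) ((p γ).symm (q γ (q γ z)))
            (succ α β (p α x) (p β (p β ((q β).symm y))))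
        + prec γ (α * β) ((p γ).symm (q γ (q γ z)))
            (prec β α (p β y) (p α (p α ((q α).symm x)))) := by
  simp only [preLieOfDendriform, map_sub, LinearMap.sub_apply, hD.p_succ.eq,
    hD.p_prec.apply_swap, hD.q_succ.symm_apply, hD.q_prec.symm_apply_swap, hD.q_p,
    hD.symm_q_p, LinearEquiv.symm_apply_apply]
  abel

theorem preLieOfDendriform_associator_eq (hD : IsBiHomDendriform prec succ p q) (α β γ : Ω)
    (x y z : A) :
    preLieOfDendriform prec succ p q α (β * γ) (p α (q α x))
        (preLieOfDendriform prec succ p q β γ (p β y) z)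
      - preLieOfDendriform prec succ p q (α * β) γ
          (preLieOfDendriform prec succ p q α β (q α x) (p β y)) (q γ z)
      = succ (α * β) γ (prec α β (q α x) (p β y)) (q γ z)
        + succ (β * α) γ (prec β α (q β y) (p α x)) (q γ z)
        - prec (α * γ) β (succ α γ (q α x) ((p γ).symm (q γ z))) (p β (p β y))
        - prec (β * γ) α (succ β γ (q β y) ((p γ).symm (q γ z))) (p α (p α x))
        + prec γ (α * β) ((p γ).symm (q γ (q γ z)))
            (succ α β (p α x) (p β (p β ((q β).symm y))))
        + prec γ (β * α) ((p γ).symm (q γ (q γ z)))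
            (succ β α (p β y) (p α (p α ((q α).symm x)))) := by
  have h_succ_succ : succ α (β * γ) (p α (q α x)) (succ β γ (p β y) z)
      = succ (α * β) γ (prec α β (q α x) (p β y)) (q γ z)
        + succ (α * β) γ (succ α β (q α x) (p β y)) (q γ z) := by
    rw [hD.succ_succ, map_add, LinearMap.add_apply]
  have h_succ_prec : succ α (β * γ) (p α (q α x))
        (prec γ β ((p γ).symm (q γ z)) (p β (p β ((q β).symm y))))
      = prec (α * γ) β (succ α γ (q α x) ((p γ).symm (q γ z))) (p β (p β y)) := by
    rw [mul_comm β γ, ← hD.succ_prec, hD.q_p, hD.q_p, LinearEquiv.apply_symm_apply]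
  have h_prec_prec : prec (β * γ) α (prec γ β ((p γ).symm ((p γ).symm (q γ (q γ z)))) (p β y))
        (p α (p α x))
      = prec γ (β * α) ((p γ).symm (q γ (q γ z))) (prec β α (p β y) (p α (p α ((q α).symm x))))
        + prec γ (β * α) ((p γ).symm (q γ (q γ z)))
            (succ β α (p β y) (p α (p α ((q α).symm x)))) := by
    simpa only [mul_comm γ β, hD.q_p, LinearEquiv.apply_symm_apply, map_add] using
      hD.prec_prec γ β α ((p γ).symm ((p γ).symm (q γ (q γ z)))) (p β y)
        (p α (p α ((q α).symm x)))
  rw [hD.preLieOfDendriform_associator_left, hD.preLieOfDendriform_associator_right, h_succ_succ,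
    h_succ_prec, h_prec_prec, mul_comm β α]
  abel

theorem preLieOfDendriform_associator_symm (hD : IsBiHomDendriform prec succ p q) (α β γ : Ω)
    (x y z : A) :
    preLieOfDendriform prec succ p q α (β * γ) (p α (q α x))
        (preLieOfDendriform prec succ p q β γ (p β y) z)
      - preLieOfDendriform prec succ p q (α * β) γ
          (preLieOfDendriform prec succ p q α β (q α x) (p β y)) (q γ z)
      = preLieOfDendriform prec succ p q β (α * γ) (p β (q β y))
        (preLieOfDendriform prec succ p q α γ (p α x) z)
      - preLieOfDendriform prec succ p q (β * α) γ
          (preLieOfDendriform prec succ p q β α (q β y) (p α x)) (q γ z) := by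
  rw [hD.preLieOfDendriform_associator_eq, hD.preLieOfDendriform_associator_eq, mul_comm β α]
  abel

end IsBiHomDendriform

end PreLie

/-- A BiHom-Ω-dendriform algebra with bijective structure maps gives a
BiHom-Ω-pre-Lie algebra. -/
theorem stmt_8
    {K : Type*} [Field K] {Ω : Type*} [CommSemigroup Ω]
    {A : Type*} [AddCommGroup A] [Module K A]
    (prec succ : Ω → Ω → A →ₗ[K] A →ₗ[K] A)
    (p q : Ω → A →ₗ[K] A)
    -- the families commute
    (hpq : ∀ (α : Ω) (x : A), p α (q α x) = q α (p α x))
    -- multiplicativity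
    (hpprec : ∀ (α β : Ω) (x y : A), p (α * β) (prec α β x y) = prec α β (p α x) (p β y))
    (hpsucc : ∀ (α β : Ω) (x y : A), p (α * β) (succ α β x y) = succ α β (p α x) (p β y))
    (hqprec : ∀ (α β : Ω) (x y : A), q (α * β) (prec α β x y) = prec α β (q α x) (q β y))
    (hqsucc : ∀ (α β : Ω) (x y : A), q (α * β) (succ α β x y) = succ α β (q α x) (q β y))
    -- BiHom-Ω-dendriform axioms
    (hden1 : ∀ (α β γ : Ω) (x y z : A),
      prec (α * β) γ (prec α β x y) (q γ z)
        = prec α (β * γ) (p α x) (prec β γ y z + succ β γ y z))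
    (hden2 : ∀ (α β γ : Ω) (x y z : A),
      prec (α * β) γ (succ α β x y) (q γ z) = succ α (β * γ) (p α x) (prec β γ y z))
    (hden3 : ∀ (α β γ : Ω) (x y z : A),
      succ α (β * γ) (p α x) (succ β γ y z)
        = succ (α * β) γ (prec α β x y + succ α β x y) (q γ z))
    -- p, q are bijective, with inverses pinv, qinv
    (pinv qinv : Ω → A → A)
    (hpinv1 : ∀ (α : Ω) (x : A), p α (pinv α x) = x)
    (hpinv2 : ∀ (α : Ω) (x : A), pinv α (p α x) = x)
    (hqinv1 : ∀ (α : Ω) (x : A), q α (qinv α x) = x)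
    (hqinv2 : ∀ (α : Ω) (x : A), qinv α (q α x) = x)
    -- the induced operation
    (ob : Ω → Ω → A → A → A)
    (hob : ∀ (α β : Ω) (x y : A),
      ob α β x y = succ α β x y - prec β α (pinv β (q β y)) (p α (qinv α x))) :
    -- (A, ob, p, q) is a BiHom-Ω-pre-Lie algebra
    (∀ (α β : Ω) (x y : A), p (α * β) (ob α β x y) = ob α β (p α x) (p β y)) ∧
    (∀ (α β : Ω) (x y : A), q (α * β) (ob α β x y) = ob α β (q α x) (q β y)) ∧
    (∀ (α β γ : Ω) (x y z : A),
      ob α (β * γ) (p α (q α x)) (ob β γ (p β y) z)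
          - ob (α * β) γ (ob α β (q α x) (p β y)) (q γ z)
        = ob β (α * γ) (p β (q β y)) (ob α γ (p α x) z)
          - ob (β * α) γ (ob β α (q β y) (p α x)) (q γ z)) := by
  let P : Ω → A ≃ₗ[K] A := fun α ↦
    { p α with invFun := pinv α, left_inv := hpinv2 α, right_inv := hpinv1 α }
  let Q : Ω → A ≃ₗ[K] A := fun α ↦
    { q α with invFun := qinv α, left_inv := hqinv2 α, right_inv := hqinv1 α }
  have hD : IsBiHomDendriform prec succ P Q :=
    ⟨hpq, hpprec, hpsucc, hqprec, hqsucc, hden1, hden2, hden3⟩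
  obtain rfl : ob = preLieOfDendriform prec succ P Q := by
    funext α β x y
    exact hob α β x y
  exact ⟨hD.p_apply_preLieOfDendriform, hD.q_apply_preLieOfDendriform,
    hD.preLieOfDendriform_associator_symm⟩
end

section
/- Let $\Omega$ be a commutative semigroup. Every BiHom-$\Omega$-associative algebra $(A, \bullet_{\alpha,\beta}, p_\alpha, q_\alpha)_{\alpha,\beta\in\Omega}$ is a BiHom-$\Omega$-pre-Lie algebra with the same operations and structure maps. -/
theorem stmt_9_general
    {K : Type*} [Field K] {Ω : Type*} [CommSemigroup Ω]
    {A : Type*} [AddCommGroup A] [Module K A]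
    (mul : Ω → Ω → A →ₗ[K] A →ₗ[K] A)
    (p q : Ω → A →ₗ[K] A)
    -- (A, mul, p, q) is a BiHom-Ω-associative algebra
    (hp : ∀ (α β : Ω) (x y : A), p (α * β) (mul α β x y) = mul α β (p α x) (p β y))
    (hq : ∀ (α β : Ω) (x y : A), q (α * β) (mul α β x y) = mul α β (q α x) (q β y))
    (hassoc : ∀ (α β γ : Ω) (x y z : A),
      mul α (β * γ) (p α x) (mul β γ y z) = mul (α * β) γ (mul α β x y) (q γ z)) :
    -- (A, mul, p, q) is a BiHom-Ω-pre-Lie algebra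
    (∀ (α β : Ω) (x y : A), p (α * β) (mul α β x y) = mul α β (p α x) (p β y)) ∧
    (∀ (α β : Ω) (x y : A), q (α * β) (mul α β x y) = mul α β (q α x) (q β y)) ∧
    (∀ (α β γ : Ω) (x y z : A),
      mul α (β * γ) (p α (q α x)) (mul β γ (p β y) z)
          - mul (α * β) γ (mul α β (q α x) (p β y)) (q γ z)
        = mul β (α * γ) (p β (q β y)) (mul α γ (p α x) z)
          - mul (β * α) γ (mul β α (q β y) (p α x)) (q γ z)) := by
  refine ⟨hp, hq, fun α β γ x y z => ?_⟩
  -- each side is a BiHom-associator, applied to (q x, p y, z) resp. (q y, p x, z), hence zero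
  rw [hassoc α β γ (q α x) (p β y) z, hassoc β α γ (q β y) (p α x) z, sub_self, sub_self]

/-- Every BiHom-Ω-associative algebra is a BiHom-Ω-pre-Lie algebra. -/
theorem stmt_9
    {K : Type*} [Field K] {Ω : Type*} [CommSemigroup Ω]
    {A : Type*} [AddCommGroup A] [Module K A]
    (mul : Ω → Ω → A →ₗ[K] A →ₗ[K] A)
    (p q : Ω → A →ₗ[K] A)
    -- (A, mul, p, q) is a BiHom-Ω-associative algebra
    (hp : ∀ (α β : Ω) (x y : A), p (α * β) (mul α β x y) = mul α β (p α x) (p β y))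
    (hq : ∀ (α β : Ω) (x y : A), q (α * β) (mul α β x y) = mul α β (q α x) (q β y))
    (hpq : ∀ (α : Ω) (x : A), p α (q α x) = q α (p α x))
    (hassoc : ∀ (α β γ : Ω) (x y z : A),
      mul α (β * γ) (p α x) (mul β γ y z) = mul (α * β) γ (mul α β x y) (q γ z)) :
    -- (A, mul, p, q) is a BiHom-Ω-pre-Lie algebra
    (∀ (α β : Ω) (x y : A), p (α * β) (mul α β x y) = mul α β (p α x) (p β y)) ∧
    (∀ (α β : Ω) (x y : A), q (α * β) (mul α β x y) = mul α β (q α x) (q β y)) ∧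
    (∀ (α β γ : Ω) (x y z : A),
      mul α (β * γ) (p α (q α x)) (mul β γ (p β y) z)
          - mul (α * β) γ (mul α β (q α x) (p β y)) (q γ z)
        = mul β (α * γ) (p β (q β y)) (mul α γ (p α x) z)
          - mul (β * α) γ (mul β α (q β y) (p α x)) (q γ z)) :=
  stmt_9_general mul p q hp hq hassoc
end

section
/- Let $\Omega$ be a commutative semigroup and $(A, \blacktriangleright_{\alpha,\beta}, p_\alpha, q_\alpha)_{\alpha,\beta\in\Omega}$ a BiHom-$\Omega$-pre-Lie algebra with $p_\alpha, q_\alpha$ bijective. Define $\{x,y\}_{\alpha,\beta} := x\blacktriangleright_{\alpha,\beta}y - (p_\beta^{-1}q_\beta(y))\blacktriangleright_{\beta,\alpha}(p_\alpha q_\alpha^{-1}(x))$. Then $(A, \{\cdot,\cdot\}_{\alpha,\beta}, p_\alpha, q_\alpha)_{\alpha,\beta\in\Omega}$ is a BiHom-$\Omega$-Lie algebra. -/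
/-- A BiHom-Ω-pre-Lie algebra with bijective structure maps gives a BiHom-Ω-Lie algebra. -/
theorem stmt_11
    {K : Type*} [Field K] {Ω : Type*} [CommSemigroup Ω]
    {A : Type*} [AddCommGroup A] [Module K A]
    (pre : Ω → Ω → A →ₗ[K] A →ₗ[K] A)
    (p q : Ω → A →ₗ[K] A)
    -- p, q are multiplicative (Ω-pre-Lie morphisms) and commute
    (hp : ∀ (α β : Ω) (x y : A), p (α * β) (pre α β x y) = pre α β (p α x) (p β y))
    (hq : ∀ (α β : Ω) (x y : A), q (α * β) (pre α β x y) = pre α β (q α x) (q β y))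
    (hpq : ∀ (α : Ω) (x : A), p α (q α x) = q α (p α x))
    -- BiHom-Ω-pre-Lie identity
    (hpre : ∀ (α β γ : Ω) (x y z : A),
      pre α (β * γ) (p α (q α x)) (pre β γ (p β y) z)
          - pre (α * β) γ (pre α β (q α x) (p β y)) (q γ z)
        = pre β (α * γ) (p β (q β y)) (pre α γ (p α x) z)
          - pre (β * α) γ (pre β α (q β y) (p α x)) (q γ z))
    -- p, q are bijective, with inverses pinv, qinv
    (pinv qinv : Ω → A → A)
    (hpinv1 : ∀ (α : Ω) (x : A), p α (pinv α x) = x)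
    (hpinv2 : ∀ (α : Ω) (x : A), pinv α (p α x) = x)
    (hqinv1 : ∀ (α : Ω) (x : A), q α (qinv α x) = x)
    (hqinv2 : ∀ (α : Ω) (x : A), qinv α (q α x) = x)
    -- the induced bracket
    (cbr : Ω → Ω → A → A → A)
    (hcbr : ∀ (α β : Ω) (x y : A),
      cbr α β x y = pre α β x y - pre β α (pinv β (q β y)) (p α (qinv α x))) :
    -- (A, cbr, p, q) is a BiHom-Ω-Lie algebra
    (∀ (α β : Ω) (x y : A), p (α * β) (cbr α β x y) = cbr α β (p α x) (p β y)) ∧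
    (∀ (α β : Ω) (x y : A), q (α * β) (cbr α β x y) = cbr α β (q α x) (q β y)) ∧
    (∀ (α β : Ω) (x y : A), cbr α β (q α x) (p β y) = - cbr β α (q β y) (p α x)) ∧
    (∀ (α β γ : Ω) (x y z : A),
      cbr α (β * γ) (q α (q α x)) (cbr β γ (q β y) (p γ z))
        + cbr β (γ * α) (q β (q β y)) (cbr γ α (q γ z) (p α x))
        + cbr γ (α * β) (q γ (q γ z)) (cbr α β (q α x) (p β y)) = 0) := by

  have pinj : ∀ (a : Ω), Function.Injective (p a) := by
    intro a s t h
    rw [← hpinv2 a s, h, hpinv2]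
  have qp : ∀ (a : Ω) (t : A), q a (p a t) = p a (q a t) := fun a t => (hpq a t).symm
  have q_pinv : ∀ (a : Ω) (t : A), q a (pinv a t) = pinv a (q a t) := by
    intro a t
    apply pinj a
    rw [hpq, hpinv1, hpinv1]
  have qinv_p : ∀ (a : Ω) (t : A), qinv a (p a t) = p a (qinv a t) := by
    intro a t
    have h : p a t = q a (p a (qinv a t)) := by rw [qp, hqinv1]
    rw [h, hqinv2]
  have pinv_sub : ∀ (a : Ω) (s t : A), pinv a (s - t) = pinv a s - pinv a t := by
    intro a s t
    apply pinj a
    rw [hpinv1, map_sub, hpinv1, hpinv1]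
  have hp2 : ∀ (a b : Ω) (x y : A), p (a * b) (pre b a x y) = pre b a (p b x) (p a y) := by
    intro a b x y; rw [mul_comm]; exact hp b a x y
  have hq2 : ∀ (a b : Ω) (x y : A), q (a * b) (pre b a x y) = pre b a (q b x) (q a y) := by
    intro a b x y; rw [mul_comm]; exact hq b a x y
  have hpinv_pre : ∀ (a b : Ω) (x y : A), pinv (a * b) (pre a b x y) = pre a b (pinv a x) (pinv b y) := by
    intro a b x y
    apply pinj (a * b)
    rw [hpinv1, hp, hpinv1, hpinv1]
  have hpinv_pre2 : ∀ (a b : Ω) (x y : A), pinv (a * b) (pre b a x y) = pre b a (pinv b x) (pinv a y) := by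
    intro a b x y; rw [mul_comm]; exact hpinv_pre b a x y
  refine ⟨?_, ?_, ?_, ?_⟩
  · intro α β x y
    simp only [hcbr, map_sub, LinearMap.sub_apply, hp, hp2, hq, hq2, qp, q_pinv, qinv_p,
      pinv_sub, hpinv_pre, hpinv_pre2, hpinv1, hpinv2, hqinv1, hqinv2]
  · intro α β x y
    simp only [hcbr, map_sub, LinearMap.sub_apply, hp, hp2, hq, hq2, qp, q_pinv, qinv_p,
      pinv_sub, hpinv_pre, hpinv_pre2, hpinv1, hpinv2, hqinv1, hqinv2]
  · intro α β x y
    simp only [hcbr, map_sub, LinearMap.sub_apply, hp, hp2, hq, hq2, qp, q_pinv, qinv_p,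
      pinv_sub, hpinv_pre, hpinv_pre2, hpinv1, hpinv2, hqinv1, hqinv2]
    abel
  · intro α β γ x y z
    have I1 := hpre α β γ (pinv α (q α x)) (pinv β (q β y)) (p γ z)
    have I2 := hpre β γ α (pinv β (q β y)) (pinv γ (q γ z)) (p α x)
    have I3 := hpre γ α β (pinv γ (q γ z)) (pinv α (q α x)) (p β y)
    simp only [hcbr, map_sub, LinearMap.sub_apply, hp, hp2, hq, hq2, qp, q_pinv, qinv_p,
      pinv_sub, hpinv_pre, hpinv_pre2, hpinv1, hpinv2, hqinv1, hqinv2] at I1 I2 I3 ⊢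
    rw [mul_comm α γ, mul_comm β α] at I1
    rw [mul_comm β α, mul_comm γ β] at I2
    rw [mul_comm γ β, mul_comm α γ] at I3
    have J1 := sub_eq_zero_of_eq I1
    have J2 := sub_eq_zero_of_eq I2
    have J3 := sub_eq_zero_of_eq I3
    have total := congrArg₂ (· + ·) (congrArg₂ (· + ·) J1 J2) J3
    simp only [add_zero, zero_add] at total
    rw [← total]
    abel
end

section
/- Let $\Omega$ be a commutative semigroup and $(A, \bullet_{\alpha,\beta}, p_\alpha, q_\alpha)_{\alpha,\beta\in\Omega}$ a BiHom-$\Omega$-associative algebra with $p_\alpha, q_\alpha$ bijective. Define $\{x,y\}_{\alpha,\beta} := x\bullet_{\alpha,\beta}y - p_\beta^{-1}q_\beta(y)\bullet_{\beta,\alpha}p_\alpha q_\alpha^{-1}(x)$. Then $(A, \{\cdot,\cdot\}_{\alpha,\beta}, p_\alpha, q_\alpha)_{\alpha,\beta\in\Omega}$ is a BiHom-$\Omega$-Lie algebra. -/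
/-!
Write `τ_α = p_α⁻¹ q_α`. On arguments of the form `q_α x`, `p_β y` the bracket becomes the
plain commutator `q_α x • p_β y - q_β y • p_α x`, which gives skew-symmetry at once. Expanding a
double bracket `{q²x, {q y, p z}}` and moving every product to the left-normed form
`(τ(q x) • q y) • q p z` with BiHom-associativity, it becomes a signed sum of four such terms;
each one occurs twice with opposite signs in the cyclic sum, so the BiHom-Jacobi identity holds.
-/

open Function

section BiHomCommutator

variable {K A : Type*} [CommSemiring K] [AddCommGroup A] [Module K A]

lemma inverse_map_sub {f : A →ₗ[K] A} {g : A → A} (h₁ : LeftInverse g f)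
    (h₂ : RightInverse g f) (u v : A) : g (u - v) = g u - g v :=
  map_sub (f.inverse g h₁ h₂) u v

variable {Ω : Type*} (mul : Ω → Ω → A →ₗ[K] A →ₗ[K] A) (p q : Ω → A →ₗ[K] A)
  (pinv qinv : Ω → A → A)

def commBracket (α β : Ω) (x y : A) : A :=
  mul α β x y - mul β α (pinv β (q β y)) (p α (qinv α x))

variable {mul p q pinv qinv}

lemma commBracket_q_p (hpq : ∀ (α : Ω) (x : A), p α (q α x) = q α (p α x))
    (hpinv2 : ∀ (α : Ω) (x : A), pinv α (p α x) = x)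
    (hqinv2 : ∀ (α : Ω) (x : A), qinv α (q α x) = x) (α β : Ω) (x y : A) :
    commBracket mul p q pinv qinv α β (q α x) (p β y)
      = mul α β (q α x) (p β y) - mul β α (q β y) (p α x) := by
  rw [commBracket, ← hpq, hpinv2, hqinv2]

lemma commBracket_skew (hpq : ∀ (α : Ω) (x : A), p α (q α x) = q α (p α x))
    (hpinv2 : ∀ (α : Ω) (x : A), pinv α (p α x) = x)
    (hqinv2 : ∀ (α : Ω) (x : A), qinv α (q α x) = x) (α β : Ω) (x y : A) :
    commBracket mul p q pinv qinv α β (q α x) (p β y)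
      = -commBracket mul p q pinv qinv β α (q β y) (p α x) := by
  rw [commBracket_q_p hpq hpinv2 hqinv2, commBracket_q_p hpq hpinv2 hqinv2, neg_sub]

variable [CommSemigroup Ω]

lemma pinv_mul_apply 
    (hp : ∀ (α β : Ω) (x y : A), p (α * β) (mul α β x y) = mul α β (p α x) (p β y))
    (hpinv1 : ∀ (α : Ω) (x : A), p α (pinv α x) = x)
    (hpinv2 : ∀ (α : Ω) (x : A), pinv α (p α x) = x) (α β : Ω) (x y : A) :
    pinv (α * β) (mul α β x y) = mul α β (pinv α x) (pinv β y) := by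
  conv_rhs => rw [← hpinv2 (α * β) (mul α β (pinv α x) (pinv β y)), hp, hpinv1, hpinv1]

lemma mul_mul_eq_mul_pinv (hassoc : ∀ (α β γ : Ω) (x y z : A),
      mul α (β * γ) (p α x) (mul β γ y z) = mul (α * β) γ (mul α β x y) (q γ z))
    (hpinv1 : ∀ (α : Ω) (x : A), p α (pinv α x) = x) (α β γ : Ω) (u y z : A) :
    mul α (β * γ) u (mul β γ y z) = mul (α * β) γ (mul α β (pinv α u) y) (q γ z) := by
  rw [← hassoc, hpinv1]

lemma p_commBracket 
    (hp : ∀ (α β : Ω) (x y : A), p (α * β) (mul α β x y) = mul α β (p α x) (p β y))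
    (hpq : ∀ (α : Ω) (x : A), p α (q α x) = q α (p α x))
    (hpinv1 : ∀ (α : Ω) (x : A), p α (pinv α x) = x)
    (hpinv2 : ∀ (α : Ω) (x : A), pinv α (p α x) = x)
    (hqinv1 : ∀ (α : Ω) (x : A), q α (qinv α x) = x)
    (hqinv2 : ∀ (α : Ω) (x : A), qinv α (q α x) = x) (α β : Ω) (x y : A) :
    p (α * β) (commBracket mul p q pinv qinv α β x y)
      = commBracket mul p q pinv qinv α β (p α x) (p β y) := by
  have hqinv_p : Semiconj (qinv α) (p α) (p α) :=
    Semiconj.inverse_left (fun x ↦ (hpq α x).symm) (hqinv2 α) (hqinv1 α)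
  rw [commBracket, commBracket, map_sub, hp, mul_comm α β, hp, hpinv1, ← hpq, hpinv2,
    hqinv_p]

lemma q_commBracket
    (hq : ∀ (α β : Ω) (x y : A), q (α * β) (mul α β x y) = mul α β (q α x) (q β y))
    (hpq : ∀ (α : Ω) (x : A), p α (q α x) = q α (p α x))
    (hpinv1 : ∀ (α : Ω) (x : A), p α (pinv α x) = x)
    (hpinv2 : ∀ (α : Ω) (x : A), pinv α (p α x) = x)
    (hqinv1 : ∀ (α : Ω) (x : A), q α (qinv α x) = x)
    (hqinv2 : ∀ (α : Ω) (x : A), qinv α (q α x) = x) (α β : Ω) (x y : A) :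
    q (α * β) (commBracket mul p q pinv qinv α β x y)
      = commBracket mul p q pinv qinv α β (q α x) (q β y) := by
  have hpinv_q : Semiconj (pinv β) (q β) (q β) :=
    Semiconj.inverse_left (hpq β) (hpinv2 β) (hpinv1 β)
  rw [commBracket, commBracket, map_sub, hq, mul_comm α β, hq, ← hpinv_q, hqinv2, ← hpq,
    hqinv1]

variable (mul p q pinv) in
def jacobiTerm (α β γ : Ω) (x y z : A) : A :=
  mul (α * β) γ (mul α β (pinv α (q α (q α x))) (q β y)) (q γ (p γ z))

lemma commBracket_commBracket
    (hp : ∀ (α β : Ω) (x y : A), p (α * β) (mul α β x y) = mul α β (p α x) (p β y))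
    (hq : ∀ (α β : Ω) (x y : A), q (α * β) (mul α β x y) = mul α β (q α x) (q β y))
    (hpq : ∀ (α : Ω) (x : A), p α (q α x) = q α (p α x))
    (hassoc : ∀ (α β γ : Ω) (x y z : A),
      mul α (β * γ) (p α x) (mul β γ y z) = mul (α * β) γ (mul α β x y) (q γ z))
    (hpinv1 : ∀ (α : Ω) (x : A), p α (pinv α x) = x)
    (hpinv2 : ∀ (α : Ω) (x : A), pinv α (p α x) = x)
    (hqinv2 : ∀ (α : Ω) (x : A), qinv α (q α x) = x) (α β γ : Ω) (x y z : A) :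
    commBracket mul p q pinv qinv α (β * γ) (q α (q α x))
        (commBracket mul p q pinv qinv β γ (q β y) (p γ z))
      = jacobiTerm mul p q pinv α β γ x y z - jacobiTerm mul p q pinv α γ β x z y
        - jacobiTerm mul p q pinv β γ α y z x + jacobiTerm mul p q pinv γ β α z y x := by
  have hτp : ∀ (α : Ω) (x : A), pinv α (q α (p α x)) = q α x := fun α x ↦ by
    rw [← hpq, hpinv2]
  have hτ_mul : ∀ (α β : Ω) (x y : A),
      pinv (α * β) (q (α * β) (mul α β x y))
        = mul α β (pinv α (q α x)) (pinv β (q β y)) :=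
    fun α β x y ↦ by rw [hq, pinv_mul_apply hp hpinv1 hpinv2]
  have hτ_mul' := hτ_mul γ β (q γ z) (p β y)
  rw [mul_comm γ β] at hτ_mul'
  have hassoc' := mul_mul_eq_mul_pinv hassoc hpinv1 α γ β (q α (q α x)) (q γ z) (p β y)
  rw [mul_comm γ β] at hassoc'
  rw [commBracket_q_p hpq hpinv2 hqinv2, commBracket, map_sub (q (β * γ)),
    inverse_map_sub (hpinv2 _) (hpinv1 _), hτ_mul, hτ_mul', hτp, hτp, hqinv2, hpq α x]
  simp only [map_sub, LinearMap.sub_apply]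
  rw [mul_mul_eq_mul_pinv hassoc hpinv1, hassoc']
  simp only [jacobiTerm, mul_comm γ β]
  abel

lemma commBracket_jacobi
    (hp : ∀ (α β : Ω) (x y : A), p (α * β) (mul α β x y) = mul α β (p α x) (p β y))
    (hq : ∀ (α β : Ω) (x y : A), q (α * β) (mul α β x y) = mul α β (q α x) (q β y))
    (hpq : ∀ (α : Ω) (x : A), p α (q α x) = q α (p α x))
    (hassoc : ∀ (α β γ : Ω) (x y z : A),
      mul α (β * γ) (p α x) (mul β γ y z) = mul (α * β) γ (mul α β x y) (q γ z))
    (hpinv1 : ∀ (α : Ω) (x : A), p α (pinv α x) = x)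
    (hpinv2 : ∀ (α : Ω) (x : A), pinv α (p α x) = x)
    (hqinv2 : ∀ (α : Ω) (x : A), qinv α (q α x) = x) (α β γ : Ω) (x y z : A) :
    commBracket mul p q pinv qinv α (β * γ) (q α (q α x))
        (commBracket mul p q pinv qinv β γ (q β y) (p γ z))
      + commBracket mul p q pinv qinv β (γ * α) (q β (q β y))
        (commBracket mul p q pinv qinv γ α (q γ z) (p α x))
      + commBracket mul p q pinv qinv γ (α * β) (q γ (q γ z))
        (commBracket mul p q pinv qinv α β (q α x) (p β y)) = 0 := by
  simp only [commBracket_commBracket hp hq hpq hassoc hpinv1 hpinv2 hqinv2]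
  abel

end BiHomCommutator
/-- The commutator of a BiHom-Ω-associative algebra with bijective structure maps
is a BiHom-Ω-Lie algebra. -/
theorem stmt_12
    {K : Type*} [Field K] {Ω : Type*} [CommSemigroup Ω]
    {A : Type*} [AddCommGroup A] [Module K A]
    (mul : Ω → Ω → A →ₗ[K] A →ₗ[K] A)
    (p q : Ω → A →ₗ[K] A)
    -- (A, mul, p, q) is a BiHom-Ω-associative algebra
    (hp : ∀ (α β : Ω) (x y : A), p (α * β) (mul α β x y) = mul α β (p α x) (p β y))
    (hq : ∀ (α β : Ω) (x y : A), q (α * β) (mul α β x y) = mul α β (q α x) (q β y))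
    (hpq : ∀ (α : Ω) (x : A), p α (q α x) = q α (p α x))
    (hassoc : ∀ (α β γ : Ω) (x y z : A),
      mul α (β * γ) (p α x) (mul β γ y z) = mul (α * β) γ (mul α β x y) (q γ z))
    -- p, q are bijective, with inverses pinv, qinv
    (pinv qinv : Ω → A → A)
    (hpinv1 : ∀ (α : Ω) (x : A), p α (pinv α x) = x)
    (hpinv2 : ∀ (α : Ω) (x : A), pinv α (p α x) = x)
    (hqinv1 : ∀ (α : Ω) (x : A), q α (qinv α x) = x)
    (hqinv2 : ∀ (α : Ω) (x : A), qinv α (q α x) = x)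
    -- the commutator bracket
    (cbr : Ω → Ω → A → A → A)
    (hcbr : ∀ (α β : Ω) (x y : A),
      cbr α β x y = mul α β x y - mul β α (pinv β (q β y)) (p α (qinv α x))) :
    -- (A, cbr, p, q) is a BiHom-Ω-Lie algebra
    (∀ (α β : Ω) (x y : A), p (α * β) (cbr α β x y) = cbr α β (p α x) (p β y)) ∧
    (∀ (α β : Ω) (x y : A), q (α * β) (cbr α β x y) = cbr α β (q α x) (q β y)) ∧
    (∀ (α β : Ω) (x y : A), cbr α β (q α x) (p β y) = - cbr β α (q β y) (p α x)) ∧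
    (∀ (α β γ : Ω) (x y z : A),
      cbr α (β * γ) (q α (q α x)) (cbr β γ (q β y) (p γ z))
        + cbr β (γ * α) (q β (q β y)) (cbr γ α (q γ z) (p α x))
        + cbr γ (α * β) (q γ (q γ z)) (cbr α β (q α x) (p β y)) = 0) := by
  obtain rfl : cbr = commBracket mul p q pinv qinv := by
    funext α β x y
    exact hcbr α β x y
  exact ⟨p_commBracket hp hpq hpinv1 hpinv2 hqinv1 hqinv2,
    q_commBracket hq hpq hpinv1 hpinv2 hqinv1 hqinv2,
    commBracket_skew hpq hpinv2 hqinv2,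
    commBracket_jacobi hp hq hpq hassoc hpinv1 hpinv2 hqinv2⟩
end

section
/- Let $\Omega$ be a commutative semigroup, $(L, \{\cdot,\cdot\}_{\alpha,\beta}, p_\alpha, q_\alpha)_{\alpha,\beta\in\Omega}$ a BiHom-$\Omega$-Lie algebra, and $(R_\alpha)_{\alpha\in\Omega}$ a Rota-Baxter family of weight $\lambda$ on $L$ with $R_\alpha\circ p_\alpha = p_\alpha\circ R_\alpha$ and $R_\alpha\circ q_\alpha = q_\alpha\circ R_\alpha$. Define $\langle x,y\rangle_{\alpha,\beta} := \{R_\alpha(x), y\}_{\alpha,\beta} + \{x, R_\beta(y)\}_{\alpha,\beta} + \lambda\{x,y\}_{\alpha,\beta}$. Then $(L, \langle\cdot,\cdot\rangle_{\alpha,\beta}, p_\alpha, q_\alpha)_{\alpha,\beta\in\Omega}$ is a BiHom-$\Omega$-Lie algebra. -/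
/-!
Applying `R_{αβ}` to the new bracket gives back the old one on the images,
`R_{αβ} ⟨x, y⟩_{α,β} = {R_α x, R_β y}_{α,β}`. Hence every nested term
`⟨q_α² x, ⟨q_β y, p_γ z⟩⟩` expands into the seven nested old brackets in which `R` is applied to
at most two of `x, y, z`, with weight `1`, `λ` or `λ²` according as two, one or none of them carry
an `R` (`R` moves past `p` and `q`). Summing cyclically, the seven groups are old BiHom-Jacobi sums.
-/

section RotaBaxterBracket

variable {K Ω L : Type*} [CommRing K] [AddCommGroup L] [Module K L]
  (br : Ω → Ω → L →ₗ[K] L →ₗ[K] L) (p q R : Ω → L →ₗ[K] L) (lam : K)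

def rotaBaxterBracket (α β : Ω) (x y : L) : L :=
  br α β (R α x) y + br α β x (R β y) + lam • br α β x y

variable {br p q R lam}

theorem rotaBaxterBracket_skew
    (hskew : ∀ (α β : Ω) (x y : L), br α β (q α x) (p β y) = - br β α (q β y) (p α x))
    (hRp : ∀ (α : Ω) (x : L), R α (p α x) = p α (R α x))
    (hRq : ∀ (α : Ω) (x : L), R α (q α x) = q α (R α x)) (α β : Ω) (x y : L) :
    rotaBaxterBracket br R lam α β (q α x) (p β y)
      = - rotaBaxterBracket br R lam β α (q β y) (p α x) := by
  simp only [rotaBaxterBracket, hRp, hRq, hskew α β _ (R β y), hskew α β (R α x), hskew α β x y]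
  module

variable [Mul Ω]

variable (br p q) in
def nestedBracket (α β γ : Ω) (x y z : L) : L :=
  br α (β * γ) (q α (q α x)) (br β γ (q β y) (p γ z))

theorem apply_rotaBaxterBracket
    (hRB : ∀ (α β : Ω) (x y : L),
      br α β (R α x) (R β y)
        = R (α * β) (br α β (R α x) y + br α β x (R β y) + lam • br α β x y))
    (α β : Ω) (x y : L) :
    R (α * β) (rotaBaxterBracket br R lam α β x y) = br α β (R α x) (R β y) :=
  (hRB α β x y).symm

theorem map_rotaBaxterBracket (f : Ω → L →ₗ[K] L)
    (hf : ∀ (α β : Ω) (x y : L), f (α * β) (br α β x y) = br α β (f α x) (f β y))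
    (hRf : ∀ (α : Ω) (x : L), R α (f α x) = f α (R α x)) (α β : Ω) (x y : L) :
    f (α * β) (rotaBaxterBracket br R lam α β x y)
      = rotaBaxterBracket br R lam α β (f α x) (f β y) := by
  simp only [rotaBaxterBracket, map_add, map_smul, hf, hRf]

theorem rotaBaxterBracket_nested
    (hRB : ∀ (α β : Ω) (x y : L),
      br α β (R α x) (R β y)
        = R (α * β) (br α β (R α x) y + br α β x (R β y) + lam • br α β x y))
    (hRp : ∀ (α : Ω) (x : L), R α (p α x) = p α (R α x))
    (hRq : ∀ (α : Ω) (x : L), R α (q α x) = q α (R α x)) (α β γ : Ω) (x y z : L) :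
    rotaBaxterBracket br R lam α (β * γ) (q α (q α x))
        (rotaBaxterBracket br R lam β γ (q β y) (p γ z))
      = nestedBracket br p q α β γ (R α x) (R β y) z
        + nestedBracket br p q α β γ (R α x) y (R γ z)
        + nestedBracket br p q α β γ x (R β y) (R γ z)
        + lam • (nestedBracket br p q α β γ (R α x) y z
          + nestedBracket br p q α β γ x (R β y) z
          + nestedBracket br p q α β γ x y (R γ z))
        + lam ^ 2 • nestedBracket br p q α β γ x y z := by
  rw [rotaBaxterBracket, apply_rotaBaxterBracket hRB]
  simp only [rotaBaxterBracket, nestedBracket, hRp, hRq, map_add, map_smul]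
  module

theorem rotaBaxterBracket_jacobi
    (hjac : ∀ (α β γ : Ω) (x y z : L),
      nestedBracket br p q α β γ x y z + nestedBracket br p q β γ α y z x
        + nestedBracket br p q γ α β z x y = 0)
    (hRB : ∀ (α β : Ω) (x y : L),
      br α β (R α x) (R β y)
        = R (α * β) (br α β (R α x) y + br α β x (R β y) + lam • br α β x y))
    (hRp : ∀ (α : Ω) (x : L), R α (p α x) = p α (R α x))
    (hRq : ∀ (α : Ω) (x : L), R α (q α x) = q α (R α x)) (α β γ : Ω) (x y z : L) :
    rotaBaxterBracket br R lam α (β * γ) (q α (q α x))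
          (rotaBaxterBracket br R lam β γ (q β y) (p γ z))
        + rotaBaxterBracket br R lam β (γ * α) (q β (q β y))
          (rotaBaxterBracket br R lam γ α (q γ z) (p α x))
        + rotaBaxterBracket br R lam γ (α * β) (q γ (q γ z))
          (rotaBaxterBracket br R lam α β (q α x) (p β y)) = 0 := by
  simp only [rotaBaxterBracket_nested hRB hRp hRq]
  linear_combination (norm := module)
    hjac α β γ (R α x) (R β y) z + hjac α β γ (R α x) y (R γ z)
      + hjac α β γ x (R β y) (R γ z)
      + lam • (hjac α β γ (R α x) y z + hjac α β γ x (R β y) z + hjac α β γ x y (R γ z))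
      + lam ^ 2 • hjac α β γ x y z

end RotaBaxterBracket

theorem stmt_13_general
    {K : Type*} [Field K] {Ω : Type*} [CommSemigroup Ω]
    {L : Type*} [AddCommGroup L] [Module K L]
    (br : Ω → Ω → L →ₗ[K] L →ₗ[K] L)
    (p q : Ω → L →ₗ[K] L)
    (lam : K)
    -- (L, br, p, q) is a BiHom-Ω-Lie algebra
    (hp : ∀ (α β : Ω) (x y : L), p (α * β) (br α β x y) = br α β (p α x) (p β y))
    (hq : ∀ (α β : Ω) (x y : L), q (α * β) (br α β x y) = br α β (q α x) (q β y))
    (hskew : ∀ (α β : Ω) (x y : L), br α β (q α x) (p β y) = - br β α (q β y) (p α x))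
    (hjac : ∀ (α β γ : Ω) (x y z : L),
      br α (β * γ) (q α (q α x)) (br β γ (q β y) (p γ z))
        + br β (γ * α) (q β (q β y)) (br γ α (q γ z) (p α x))
        + br γ (α * β) (q γ (q γ z)) (br α β (q α x) (p β y)) = 0)
    -- (R_α) is a Rota-Baxter family of weight λ, commuting with p and q
    (R : Ω → L →ₗ[K] L)
    (hRB : ∀ (α β : Ω) (x y : L),
      br α β (R α x) (R β y)
        = R (α * β) (br α β (R α x) y + br α β x (R β y) + lam • br α β x y))
    (hRp : ∀ (α : Ω) (x : L), R α (p α x) = p α (R α x))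
    (hRq : ∀ (α : Ω) (x : L), R α (q α x) = q α (R α x))
    -- the new bracket
    (nbr : Ω → Ω → L → L → L)
    (hnbr : ∀ (α β : Ω) (x y : L),
      nbr α β x y = br α β (R α x) y + br α β x (R β y) + lam • br α β x y) :
    -- (L, nbr, p, q) is a BiHom-Ω-Lie algebra
    (∀ (α β : Ω) (x y : L), p (α * β) (nbr α β x y) = nbr α β (p α x) (p β y)) ∧
    (∀ (α β : Ω) (x y : L), q (α * β) (nbr α β x y) = nbr α β (q α x) (q β y)) ∧
    (∀ (α β : Ω) (x y : L), nbr α β (q α x) (p β y) = - nbr β α (q β y) (p α x)) ∧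
    (∀ (α β γ : Ω) (x y z : L),
      nbr α (β * γ) (q α (q α x)) (nbr β γ (q β y) (p γ z))
        + nbr β (γ * α) (q β (q β y)) (nbr γ α (q γ z) (p α x))
        + nbr γ (α * β) (q γ (q γ z)) (nbr α β (q α x) (p β y)) = 0) := by
  obtain rfl : nbr = rotaBaxterBracket br R lam := by
    funext α β x y
    exact hnbr α β x y
  exact ⟨map_rotaBaxterBracket p hp hRp, map_rotaBaxterBracket q hq hRq,
    rotaBaxterBracket_skew hskew hRp hRq, rotaBaxterBracket_jacobi hjac hRB hRp hRq⟩

/-- A Rota-Baxter family of weight λ on a BiHom-Ω-Lie algebra induces a new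
BiHom-Ω-Lie algebra. -/
theorem stmt_13
    {K : Type*} [Field K] {Ω : Type*} [CommSemigroup Ω]
    {L : Type*} [AddCommGroup L] [Module K L]
    (br : Ω → Ω → L →ₗ[K] L →ₗ[K] L)
    (p q : Ω → L →ₗ[K] L)
    (lam : K)
    -- (L, br, p, q) is a BiHom-Ω-Lie algebra
    (hp : ∀ (α β : Ω) (x y : L), p (α * β) (br α β x y) = br α β (p α x) (p β y))
    (hq : ∀ (α β : Ω) (x y : L), q (α * β) (br α β x y) = br α β (q α x) (q β y))
    (hpq : ∀ (α : Ω) (x : L), p α (q α x) = q α (p α x))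
    (hskew : ∀ (α β : Ω) (x y : L), br α β (q α x) (p β y) = - br β α (q β y) (p α x))
    (hjac : ∀ (α β γ : Ω) (x y z : L),
      br α (β * γ) (q α (q α x)) (br β γ (q β y) (p γ z))
        + br β (γ * α) (q β (q β y)) (br γ α (q γ z) (p α x))
        + br γ (α * β) (q γ (q γ z)) (br α β (q α x) (p β y)) = 0)
    -- (R_α) is a Rota-Baxter family of weight λ, commuting with p and q
    (R : Ω → L →ₗ[K] L)
    (hRB : ∀ (α β : Ω) (x y : L),
      br α β (R α x) (R β y)
        = R (α * β) (br α β (R α x) y + br α β x (R β y) + lam • br α β x y))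
    (hRp : ∀ (α : Ω) (x : L), R α (p α x) = p α (R α x))
    (hRq : ∀ (α : Ω) (x : L), R α (q α x) = q α (R α x))
    -- the new bracket
    (nbr : Ω → Ω → L → L → L)
    (hnbr : ∀ (α β : Ω) (x y : L),
      nbr α β x y = br α β (R α x) y + br α β x (R β y) + lam • br α β x y) :
    -- (L, nbr, p, q) is a BiHom-Ω-Lie algebra
    (∀ (α β : Ω) (x y : L), p (α * β) (nbr α β x y) = nbr α β (p α x) (p β y)) ∧
    (∀ (α β : Ω) (x y : L), q (α * β) (nbr α β x y) = nbr α β (q α x) (q β y)) ∧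
    (∀ (α β : Ω) (x y : L), nbr α β (q α x) (p β y) = - nbr β α (q β y) (p α x)) ∧
    (∀ (α β γ : Ω) (x y z : L),
      nbr α (β * γ) (q α (q α x)) (nbr β γ (q β y) (p γ z))
        + nbr β (γ * α) (q β (q β y)) (nbr γ α (q γ z) (p α x))
        + nbr γ (α * β) (q γ (q γ z)) (nbr α β (q α x) (p β y)) = 0) :=
  stmt_13_general br p q lam hp hq hskew hjac R hRB hRp hRq nbr hnbr
end

section
/- Let $\Omega$ be a commutative semigroup, $(L, \{\cdot,\cdot\}_{\alpha,\beta}, p_\alpha, q_\alpha)_{\alpha,\beta\in\Omega}$ a BiHom-$\Omega$-Lie algebra with $p_\alpha, q_\alpha$ bijective, and $(R_\alpha)_{\alpha\in\Omega}$ a Rota-Baxter family of weight $0$ on $L$ commuting with $p_\alpha$ and $q_\alpha$. Define $x\blacktriangleright_{\alpha,\beta}y := \{R_\alpha(x), y\}_{\alpha,\beta}$. Then $(L, \blacktriangleright_{\alpha,\beta}, p_\alpha, q_\alpha)_{\alpha,\beta\in\Omega}$ is a BiHom-$\Omega$-pre-Lie algebra. -/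
/-!
Write `X = R_α x`, `Y = R_β y`. By the Rota–Baxter identity and skew-symmetry,
`R_{αβ}{q X, p y} = {q X, p Y} + R_{αβ}{q Y, p x}`, and the last term is symmetric in
`(α, x) ↔ (β, y)`, so it cancels from the pre-Lie identity. What remains is the
BiHom-Leibniz identity `{pq X, {p Y, z}} = {pq Y, {p X, z}} + {{q X, p Y}, q z}`, which is
the BiHom-Jacobi identity read through skew-symmetry once every argument is written as a
value of `q` or `p`; this is where surjectivity of the structure maps enters.
-/

section BiHomLie

variable {K Ω L : Type*} [CommSemiring K] [CommSemigroup Ω] [AddCommGroup L] [Module K L]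
  {br : Ω → Ω → L →ₗ[K] L →ₗ[K] L} {p q : Ω → L →ₗ[K] L}

theorem bihom_leibniz
    (hp : ∀ (α β : Ω) (x y : L), p (α * β) (br α β x y) = br α β (p α x) (p β y))
    (hq : ∀ (α β : Ω) (x y : L), q (α * β) (br α β x y) = br α β (q α x) (q β y))
    (hpq : ∀ (α : Ω) (x : L), p α (q α x) = q α (p α x))
    (hskew : ∀ (α β : Ω) (x y : L), br α β (q α x) (p β y) = - br β α (q β y) (p α x))
    (hjac : ∀ (α β γ : Ω) (x y z : L),
      br α (β * γ) (q α (q α x)) (br β γ (q β y) (p γ z))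
        + br β (γ * α) (q β (q β y)) (br γ α (q γ z) (p α x))
        + br γ (α * β) (q γ (q γ z)) (br α β (q α x) (p β y)) = 0)
    (hpsurj : ∀ α : Ω, Function.Surjective (p α))
    (hqsurj : ∀ α : Ω, Function.Surjective (q α))
    (α β γ : Ω) (x y z : L) :
    br α (β * γ) (p α (q α x)) (br β γ (p β y) z)
      = br β (α * γ) (p β (q β y)) (br α γ (p α x) z)
        + br (α * β) γ (br α β (q α x) (p β y)) (q γ z) := by
  obtain ⟨u, hu⟩ := hqsurj α (p α x)
  obtain ⟨v, hv⟩ := hqsurj β (p β y)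
  obtain ⟨w, rfl⟩ := hpsurj γ z
  have first : br α (β * γ) (p α (q α x)) (br β γ (p β y) (p γ w))
      = br α (β * γ) (q α (q α u)) (br β γ (q β v) (p γ w)) := by
    rw [hpq, hu, hv]
  have second : br β (α * γ) (p β (q β y)) (br α γ (p α x) (p γ w))
      = - br β (γ * α) (q β (q β v)) (br γ α (q γ w) (p α u)) := by
    rw [hpq, ← hv, ← hu, hskew, map_neg, mul_comm]
  have third : br (α * β) γ (br α β (q α x) (p β y)) (q γ (p γ w))
      = - br γ (α * β) (q γ (q γ w)) (br α β (q α u) (p β v)) := by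
    rw [← hv, ← hq, ← hpq γ, hskew, hp, hu]
  rw [first, second, third]
  linear_combination (norm := abel) hjac α β γ u v w

theorem rotaBaxter_bracket_q_p {R : Ω → L →ₗ[K] L}
    (hskew : ∀ (α β : Ω) (x y : L), br α β (q α x) (p β y) = - br β α (q β y) (p α x))
    (hRB : ∀ (α β : Ω) (x y : L),
      br α β (R α x) (R β y) = R (α * β) (br α β (R α x) y + br α β x (R β y)))
    (hRp : ∀ (α : Ω) (x : L), R α (p α x) = p α (R α x))
    (hRq : ∀ (α : Ω) (x : L), R α (q α x) = q α (R α x))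
    (α β : Ω) (x y : L) :
    R (α * β) (br α β (q α (R α x)) (p β y))
      = br α β (q α (R α x)) (p β (R β y)) + R (α * β) (br β α (q β (R β y)) (p α x)) := by
  have h := hRB α β (q α x) (p β y)
  rw [hRq, hRp, hskew α β x (R β y), map_add, map_neg] at h
  rw [h]
  abel

end BiHomLie

/-- A Rota-Baxter family of weight 0 on a BiHom-Ω-Lie algebra with bijective structure
maps induces a BiHom-Ω-pre-Lie algebra. -/
theorem stmt_15
    {K : Type*} [Field K] {Ω : Type*} [CommSemigroup Ω]
    {L : Type*} [AddCommGroup L] [Module K L]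
    (br : Ω → Ω → L →ₗ[K] L →ₗ[K] L)
    (p q : Ω → L →ₗ[K] L)
    -- (L, br, p, q) is a BiHom-Ω-Lie algebra
    (hp : ∀ (α β : Ω) (x y : L), p (α * β) (br α β x y) = br α β (p α x) (p β y))
    (hq : ∀ (α β : Ω) (x y : L), q (α * β) (br α β x y) = br α β (q α x) (q β y))
    (hpq : ∀ (α : Ω) (x : L), p α (q α x) = q α (p α x))
    (hskew : ∀ (α β : Ω) (x y : L), br α β (q α x) (p β y) = - br β α (q β y) (p α x))
    (hjac : ∀ (α β γ : Ω) (x y z : L),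
      br α (β * γ) (q α (q α x)) (br β γ (q β y) (p γ z))
        + br β (γ * α) (q β (q β y)) (br γ α (q γ z) (p α x))
        + br γ (α * β) (q γ (q γ z)) (br α β (q α x) (p β y)) = 0)
    -- p, q are bijective
    (hpbij : ∀ (α : Ω), Function.Bijective (p α))
    (hqbij : ∀ (α : Ω), Function.Bijective (q α))
    -- (R_α) is a Rota-Baxter family of weight 0, commuting with p and q
    (R : Ω → L →ₗ[K] L)
    (hRB : ∀ (α β : Ω) (x y : L),
      br α β (R α x) (R β y) = R (α * β) (br α β (R α x) y + br α β x (R β y)))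
    (hRp : ∀ (α : Ω) (x : L), R α (p α x) = p α (R α x))
    (hRq : ∀ (α : Ω) (x : L), R α (q α x) = q α (R α x))
    -- the induced operation
    (ob : Ω → Ω → L → L → L)
    (hob : ∀ (α β : Ω) (x y : L), ob α β x y = br α β (R α x) y) :
    -- (L, ob, p, q) is a BiHom-Ω-pre-Lie algebra
    (∀ (α β : Ω) (x y : L), p (α * β) (ob α β x y) = ob α β (p α x) (p β y)) ∧
    (∀ (α β : Ω) (x y : L), q (α * β) (ob α β x y) = ob α β (q α x) (q β y)) ∧
    (∀ (α β γ : Ω) (x y z : L),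
      ob α (β * γ) (p α (q α x)) (ob β γ (p β y) z)
          - ob (α * β) γ (ob α β (q α x) (p β y)) (q γ z)
        = ob β (α * γ) (p β (q β y)) (ob α γ (p α x) z)
          - ob (β * α) γ (ob β α (q β y) (p α x)) (q γ z)) := by
  refine ⟨fun α β x y ↦ by simp only [hob, hp, hRp], fun α β x y ↦ by simp only [hob, hq, hRq],
    fun α β γ x y z ↦ ?_⟩
  simp only [hob, hRp, hRq]
  rw [rotaBaxter_bracket_q_p hskew hRB hRp hRq α β x y,
    bihom_leibniz hp hq hpq hskew hjac (fun α ↦ (hpbij α).2) (fun α ↦ (hqbij α).2),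
    mul_comm β α, map_add, LinearMap.add_apply]
  abel
end

section
/- Let $\Omega$ be a commutative semigroup, $(L, [\cdot,\cdot]_{\alpha,\beta}, \rhd_{\alpha,\beta})_{\alpha,\beta\in\Omega}$ an $\Omega$-PostLie algebra, and $p_\alpha, q_\alpha: L\to L$ two commuting families of $\Omega$-PostLie algebra morphisms. Define $\{x,y\}_{\alpha,\beta} := [p_\alpha(x), q_\beta(y)]_{\alpha,\beta}$ and $x\blacktriangleright_{\alpha,\beta}y := p_\alpha(x)\rhd_{\alpha,\beta}q_\beta(y)$. Then $(L, \{\cdot,\cdot\}_{\alpha,\beta}, \blacktriangleright_{\alpha,\beta}, p_\alpha, q_\alpha)_{\alpha,\beta\in\Omega}$ is a BiHom-$\Omega$-PostLie algebra. -/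
/-- Yau twist of an Ω-PostLie algebra gives a BiHom-Ω-PostLie algebra. -/
theorem stmt_16
    {K : Type*} [Field K] {Ω : Type*} [CommSemigroup Ω]
    {L : Type*} [AddCommGroup L] [Module K L]
    (br : Ω → Ω → L →ₗ[K] L →ₗ[K] L)
    (tri : Ω → Ω → L →ₗ[K] L →ₗ[K] L)
    (p q : Ω → L →ₗ[K] L)
    -- (L, br) is an Ω-Lie algebra
    (hskew : ∀ (α β : Ω) (x y : L), br α β x y = - br β α y x)
    (hjac : ∀ (α β γ : Ω) (x y z : L),
      br α (β * γ) x (br β γ y z) + br β (γ * α) y (br γ α z x)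
        + br γ (α * β) z (br α β x y) = 0)
    -- Ω-PostLie compatibility axioms
    (hpost1 : ∀ (α β γ : Ω) (x y z : L),
      tri (α * β) γ (br α β x y) z
        = tri α (β * γ) x (tri β γ y z) - tri (α * β) γ (tri α β x y) z
          - tri β (α * γ) y (tri α γ x z) + tri (β * α) γ (tri β α y x) z)
    (hpost2 : ∀ (α β γ : Ω) (x y z : L),
      tri α (β * γ) x (br β γ y z)
        = br (α * β) γ (tri α β x y) z + br β (α * γ) y (tri α γ x z))
    -- p, q are Ω-PostLie algebra morphisms
    (hpbr : ∀ (α β : Ω) (x y : L), p (α * β) (br α β x y) = br α β (p α x) (p β y))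
    (hqbr : ∀ (α β : Ω) (x y : L), q (α * β) (br α β x y) = br α β (q α x) (q β y))
    (hptri : ∀ (α β : Ω) (x y : L), p (α * β) (tri α β x y) = tri α β (p α x) (p β y))
    (hqtri : ∀ (α β : Ω) (x y : L), q (α * β) (tri α β x y) = tri α β (q α x) (q β y))
    -- the families commute
    (hpq : ∀ (α : Ω) (x : L), p α (q α x) = q α (p α x))
    -- the twisted operations
    (cbr ob : Ω → Ω → L → L → L)
    (hcbr : ∀ (α β : Ω) (x y : L), cbr α β x y = br α β (p α x) (q β y))
    (hob : ∀ (α β : Ω) (x y : L), ob α β x y = tri α β (p α x) (q β y)) :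
    -- (L, cbr, ob, p, q) is a BiHom-Ω-PostLie algebra:
    -- (L, cbr, p, q) is a BiHom-Ω-Lie algebra
    (∀ (α β : Ω) (x y : L), p (α * β) (cbr α β x y) = cbr α β (p α x) (p β y)) ∧
    (∀ (α β : Ω) (x y : L), q (α * β) (cbr α β x y) = cbr α β (q α x) (q β y)) ∧
    (∀ (α β : Ω) (x y : L), cbr α β (q α x) (p β y) = - cbr β α (q β y) (p α x)) ∧
    (∀ (α β γ : Ω) (x y z : L),
      cbr α (β * γ) (q α (q α x)) (cbr β γ (q β y) (p γ z))
        + cbr β (γ * α) (q β (q β y)) (cbr γ α (q γ z) (p α x))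
        + cbr γ (α * β) (q γ (q γ z)) (cbr α β (q α x) (p β y)) = 0) ∧
    -- multiplicativity for ob
    (∀ (α β : Ω) (x y : L), p (α * β) (ob α β x y) = ob α β (p α x) (p β y)) ∧
    (∀ (α β : Ω) (x y : L), q (α * β) (ob α β x y) = ob α β (q α x) (q β y)) ∧
    -- BiHom-Ω-PostLie compatibility axioms
    (∀ (α β γ : Ω) (x y z : L),
      ob (α * β) γ (cbr α β (q α x) (p β y)) (q γ z)
        = ob α (β * γ) (p α (q α x)) (ob β γ (p β y) z)
          - ob (α * β) γ (ob α β (q α x) (p β y)) (q γ z)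
          - ob β (α * γ) (p β (q β y)) (ob α γ (p α x) z)
          + ob (β * α) γ (ob β α (q β y) (p α x)) (q γ z)) ∧
    (∀ (α β γ : Ω) (x y z : L),
      ob α (β * γ) (p α (q α x)) (cbr β γ y z)
        = cbr (α * β) γ (ob α β (q α x) y) (q γ z)
          + cbr β (α * γ) (q β y) (ob α γ (p α x) z)) := by
  refine ⟨?_, ?_, ?_, ?_, ?_, ?_, ?_, ?_⟩
  · intro α β x y
    simp only [hcbr, hpbr, hpq]
  · intro α β x y
    simp only [hcbr, hqbr, hpq]
  · intro α β x y
    simp only [hcbr, hpq]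
    exact hskew α β (q α (p α x)) (q β (p β y))
  · intro α β γ x y z
    simp only [hcbr, hqbr, hpq]
    exact hjac α β γ (q α (q α (p α x))) (q β (q β (p β y))) (q γ (q γ (p γ z)))
  · intro α β x y
    simp only [hob, hptri, hpq]
  · intro α β x y
    simp only [hob, hqtri, hpq]
  · intro α β γ x y z
    simp only [hcbr, hob, hpbr, hqbr, hptri, hqtri, hpq]
    exact hpost1 α β γ (q α (p α (p α x))) (q β (p β (p β y))) (q γ (q γ z))
  · intro α β γ x y z
    simp only [hcbr, hob, hpbr, hqbr, hptri, hqtri, hpq]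
    exact hpost2 α β γ (q α (p α (p α x))) (q β (p β y)) (q γ (q γ z))
end

section
/- Let $\Omega$ be a commutative semigroup and $(L, \{\cdot,\cdot\}_{\alpha,\beta}, \blacktriangleright_{\alpha,\beta}, p_\alpha, q_\alpha)_{\alpha,\beta\in\Omega}$ a BiHom-$\Omega$-PostLie algebra with $p_\alpha, q_\alpha$ bijective. Define $<x,y>_{\alpha,\beta} := x\blacktriangleright_{\alpha,\beta}y - (p_\beta^{-1}q_\beta(y))\blacktriangleright_{\beta,\alpha}(p_\alpha q_\alpha^{-1}(x)) + \{x,y\}_{\alpha,\beta}$. Then $(L, <\cdot,\cdot>_{\alpha,\beta}, p_\alpha, q_\alpha)_{\alpha,\beta\in\Omega}$ is a BiHom-$\Omega$-Lie algebra. -/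
/-!
Since `p` and `q` are surjective, each axiom for `<·,·>` may be checked on arguments of the form
`q x`, `p y`, and there the inverses cancel:
`<q x, p y> = q x ▸ p y - q y ▸ p x + {q x, p y}`.
Multiplicativity and BiHom-skew-symmetry of this expression are immediate, and its BiHom-Jacobi
identity is the cyclic sum of the two compatibility axioms, BiHom-skew-symmetry of `{·,·}` and the
BiHom-Jacobi identity of `{·,·}`, as for the Lie bracket `x ▸ y - y ▸ x + {x, y}` of an ordinary
post-Lie algebra.
-/

section BiHomOmegaPostLie

variable {K Ω L : Type*} [CommSemiring K] [CommSemigroup Ω] [AddCommGroup L] [Module K L]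

/-- `br` is the Lie bracket `{·,·}` and `ob` the product `▸`. -/
structure IsBiHomOmegaPostLie (br ob : Ω → Ω → L →ₗ[K] L →ₗ[K] L) (p q : Ω → L →ₗ[K] L) :
    Prop where
  comm : ∀ (α : Ω) (x : L), p α (q α x) = q α (p α x)
  p_br : ∀ (α β : Ω) (x y : L), p (α * β) (br α β x y) = br α β (p α x) (p β y)
  q_br : ∀ (α β : Ω) (x y : L), q (α * β) (br α β x y) = br α β (q α x) (q β y)
  skew : ∀ (α β : Ω) (x y : L), br α β (q α x) (p β y) = - br β α (q β y) (p α x)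
  jacobi : ∀ (α β γ : Ω) (x y z : L),
    br α (β * γ) (q α (q α x)) (br β γ (q β y) (p γ z))
      + br β (γ * α) (q β (q β y)) (br γ α (q γ z) (p α x))
      + br γ (α * β) (q γ (q γ z)) (br α β (q α x) (p β y)) = 0
  p_ob : ∀ (α β : Ω) (x y : L), p (α * β) (ob α β x y) = ob α β (p α x) (p β y)
  q_ob : ∀ (α β : Ω) (x y : L), q (α * β) (ob α β x y) = ob α β (q α x) (q β y)
  ob_br_left : ∀ (α β γ : Ω) (x y z : L),
    ob (α * β) γ (br α β (q α x) (p β y)) (q γ z)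
      = ob α (β * γ) (p α (q α x)) (ob β γ (p β y) z)
        - ob (α * β) γ (ob α β (q α x) (p β y)) (q γ z)
        - ob β (α * γ) (p β (q β y)) (ob α γ (p α x) z)
        + ob (β * α) γ (ob β α (q β y) (p α x)) (q γ z)
  ob_br_right : ∀ (α β γ : Ω) (x y z : L),
    ob α (β * γ) (p α (q α x)) (br β γ y z)
      = br (α * β) γ (ob α β (q α x) y) (q γ z)
        + br β (α * γ) (q β y) (ob α γ (p α x) z)

/-- The induced bracket `<q x, p y>_{α,β}`, written without the inverses of `p` and `q`. -/
def qpBracket (br ob : Ω → Ω → L →ₗ[K] L →ₗ[K] L) (p q : Ω → L →ₗ[K] L) (α β : Ω) (x y : L) :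
    L :=
  ob α β (q α x) (p β y) - ob β α (q β y) (p α x) + br α β (q α x) (p β y)

namespace IsBiHomOmegaPostLie

variable {br ob : Ω → Ω → L →ₗ[K] L →ₗ[K] L} {p q : Ω → L →ₗ[K] L}

theorem p_ob_swap (h : IsBiHomOmegaPostLie br ob p q) (α β : Ω) (x y : L) :
    p (α * β) (ob β α x y) = ob β α (p β x) (p α y) :=
  mul_comm β α ▸ h.p_ob β α x y

theorem q_ob_swap (h : IsBiHomOmegaPostLie br ob p q) (α β : Ω) (x y : L) :
    q (α * β) (ob β α x y) = ob β α (q β x) (q α y) :=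
  mul_comm β α ▸ h.q_ob β α x y

theorem p_br_swap (h : IsBiHomOmegaPostLie br ob p q) (α β : Ω) (x y : L) :
    p (α * β) (br β α x y) = br β α (p β x) (p α y) :=
  mul_comm β α ▸ h.p_br β α x y

theorem q_br_swap (h : IsBiHomOmegaPostLie br ob p q) (α β : Ω) (x y : L) :
    q (α * β) (br β α x y) = br β α (q β x) (q α y) :=
  mul_comm β α ▸ h.q_br β α x y

theorem qpBracket_swap (h : IsBiHomOmegaPostLie br ob p q) (α β : Ω) (x y : L) :
    qpBracket br ob p q α β x y = - qpBracket br ob p q β α y x := by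
  simp only [qpBracket, h.skew α β x y]
  abel

theorem p_qpBracket (h : IsBiHomOmegaPostLie br ob p q) (α β : Ω) (x y : L) :
    p (α * β) (qpBracket br ob p q α β x y) = qpBracket br ob p q α β (p α x) (p β y) := by
  simp only [qpBracket, map_add, map_sub, h.p_ob, h.p_ob_swap, h.p_br, h.comm]

theorem q_qpBracket (h : IsBiHomOmegaPostLie br ob p q) (α β : Ω) (x y : L) :
    q (α * β) (qpBracket br ob p q α β x y) = qpBracket br ob p q α β (q α x) (q β y) := by
  simp only [qpBracket, map_add, map_sub, h.q_ob, h.q_ob_swap, h.q_br, h.comm]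

theorem qpBracket_jacobi (h : IsBiHomOmegaPostLie br ob p q) (α β γ : Ω) (x y z : L) :
    qpBracket br ob p q α (β * γ) (q α (p α x)) (qpBracket br ob p q β γ y z)
      + qpBracket br ob p q β (γ * α) (q β (p β y)) (qpBracket br ob p q γ α z x)
      + qpBracket br ob p q γ (α * β) (q γ (p γ z)) (qpBracket br ob p q α β x y) = 0 := by
  have R₁ := h.ob_br_right α β γ (q α x) (q β (p β y)) (p γ (p γ z))
  have R₂ := h.ob_br_right β γ α (q β y) (q γ (p γ z)) (p α (p α x))
  have R₃ := h.ob_br_right γ α β (q γ z) (q α (p α x)) (p β (p β y))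
  have S₁ := h.skew α (β * γ) (q α (p α x)) (ob β γ (q β y) (p γ z))
  have S₂ := h.skew β (γ * α) (q β (p β y)) (ob γ α (q γ z) (p α x))
  have S₃ := h.skew γ (α * β) (q γ (p γ z)) (ob α β (q α x) (p β y))
  have L₁ := h.ob_br_left β γ α (q β y) (q γ z) (p α (p α x))
  have L₂ := h.ob_br_left γ α β (q γ z) (q α x) (p β (p β y))
  have L₃ := h.ob_br_left α β γ (q α x) (q β y) (p γ (p γ z))
  have J := h.jacobi α β γ (p α x) (p β y) (p γ z)
  simp only [qpBracket, map_add, map_sub, LinearMap.add_apply, LinearMap.sub_apply,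
    h.p_ob, h.q_ob, h.p_br, h.q_br, h.p_ob_swap, h.q_ob_swap, h.p_br_swap, h.q_br_swap, h.comm,
    mul_comm] at R₁ R₂ R₃ S₁ S₂ S₃ L₁ L₂ L₃ J ⊢
  linear_combination (norm := module) R₁ + R₂ + R₃ + S₁ + S₂ + S₃ - L₁ - L₂ - L₃ + J

end IsBiHomOmegaPostLie

end BiHomOmegaPostLie

/-- A BiHom-Ω-PostLie algebra with bijective structure maps gives a BiHom-Ω-Lie algebra. -/
theorem stmt_17
    {K : Type*} [Field K] {Ω : Type*} [CommSemigroup Ω]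
    {L : Type*} [AddCommGroup L] [Module K L]
    (br ob : Ω → Ω → L →ₗ[K] L →ₗ[K] L)
    (p q : Ω → L →ₗ[K] L)
    -- the families commute
    (hpq : ∀ (α : Ω) (x : L), p α (q α x) = q α (p α x))
    -- (L, br, p, q) is a BiHom-Ω-Lie algebra
    (hpbr : ∀ (α β : Ω) (x y : L), p (α * β) (br α β x y) = br α β (p α x) (p β y))
    (hqbr : ∀ (α β : Ω) (x y : L), q (α * β) (br α β x y) = br α β (q α x) (q β y))
    (hskew : ∀ (α β : Ω) (x y : L), br α β (q α x) (p β y) = - br β α (q β y) (p α x))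
    (hjac : ∀ (α β γ : Ω) (x y z : L),
      br α (β * γ) (q α (q α x)) (br β γ (q β y) (p γ z))
        + br β (γ * α) (q β (q β y)) (br γ α (q γ z) (p α x))
        + br γ (α * β) (q γ (q γ z)) (br α β (q α x) (p β y)) = 0)
    -- multiplicativity for ob
    (hpob : ∀ (α β : Ω) (x y : L), p (α * β) (ob α β x y) = ob α β (p α x) (p β y))
    (hqob : ∀ (α β : Ω) (x y : L), q (α * β) (ob α β x y) = ob α β (q α x) (q β y))
    -- BiHom-Ω-PostLie compatibility axioms
    (hpost1 : ∀ (α β γ : Ω) (x y z : L),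
      ob (α * β) γ (br α β (q α x) (p β y)) (q γ z)
        = ob α (β * γ) (p α (q α x)) (ob β γ (p β y) z)
          - ob (α * β) γ (ob α β (q α x) (p β y)) (q γ z)
          - ob β (α * γ) (p β (q β y)) (ob α γ (p α x) z)
          + ob (β * α) γ (ob β α (q β y) (p α x)) (q γ z))
    (hpost2 : ∀ (α β γ : Ω) (x y z : L),
      ob α (β * γ) (p α (q α x)) (br β γ y z)
        = br (α * β) γ (ob α β (q α x) y) (q γ z)
          + br β (α * γ) (q β y) (ob α γ (p α x) z))
    -- p, q are bijective, with inverses pinv, qinv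
    (pinv qinv : Ω → L → L)
    (hpinv1 : ∀ (α : Ω) (x : L), p α (pinv α x) = x)
    (hpinv2 : ∀ (α : Ω) (x : L), pinv α (p α x) = x)
    (hqinv1 : ∀ (α : Ω) (x : L), q α (qinv α x) = x)
    (hqinv2 : ∀ (α : Ω) (x : L), qinv α (q α x) = x)
    -- the induced bracket
    (nbr : Ω → Ω → L → L → L)
    (hnbr : ∀ (α β : Ω) (x y : L),
      nbr α β x y
        = ob α β x y - ob β α (pinv β (q β y)) (p α (qinv α x)) + br α β x y) :
    -- (L, nbr, p, q) is a BiHom-Ω-Lie algebra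
    (∀ (α β : Ω) (x y : L), p (α * β) (nbr α β x y) = nbr α β (p α x) (p β y)) ∧
    (∀ (α β : Ω) (x y : L), q (α * β) (nbr α β x y) = nbr α β (q α x) (q β y)) ∧
    (∀ (α β : Ω) (x y : L), nbr α β (q α x) (p β y) = - nbr β α (q β y) (p α x)) ∧
    (∀ (α β γ : Ω) (x y z : L),
      nbr α (β * γ) (q α (q α x)) (nbr β γ (q β y) (p γ z))
        + nbr β (γ * α) (q β (q β y)) (nbr γ α (q γ z) (p α x))
        + nbr γ (α * β) (q γ (q γ z)) (nbr α β (q α x) (p β y)) = 0) := by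
  have h : IsBiHomOmegaPostLie br ob p q :=
    ⟨hpq, hpbr, hqbr, hskew, hjac, hpob, hqob, hpost1, hpost2⟩
  have hnbr_qp (α β : Ω) (x y : L) : nbr α β (q α x) (p β y) = qpBracket br ob p q α β x y := by
    rw [hnbr, hqinv2, ← hpq, hpinv2, qpBracket]
  have hp_surj (α : Ω) : Function.Surjective (p α) := fun x => ⟨pinv α x, hpinv1 α x⟩
  have hq_surj (α : Ω) : Function.Surjective (q α) := fun x => ⟨qinv α x, hqinv1 α x⟩
  refine ⟨?_, ?_, ?_, ?_⟩
  · intro α β x y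
    obtain ⟨x, rfl⟩ := hq_surj α x
    obtain ⟨y, rfl⟩ := hp_surj β y
    rw [hnbr_qp, h.p_qpBracket, hpq, hnbr_qp]
  · intro α β x y
    obtain ⟨x, rfl⟩ := hq_surj α x
    obtain ⟨y, rfl⟩ := hp_surj β y
    rw [hnbr_qp, h.q_qpBracket, ← hpq β y, hnbr_qp]
  · intro α β x y
    rw [hnbr_qp, hnbr_qp, h.qpBracket_swap]
  · intro α β γ x y z
    obtain ⟨x, rfl⟩ := hp_surj α x
    obtain ⟨y, rfl⟩ := hp_surj β y
    obtain ⟨z, rfl⟩ := hp_surj γ z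
    simp only [hnbr_qp, ← h.p_qpBracket]
    exact h.qpBracket_jacobi α β γ x y z
end

section
/- Let $\Omega$ be a commutative semigroup, $(L, \{\cdot,\cdot\}_{\alpha,\beta}, p_\alpha, q_\alpha)_{\alpha,\beta\in\Omega}$ a BiHom-$\Omega$-Lie algebra with $p_\alpha, q_\alpha$ bijective, and $(R_\alpha)_{\alpha\in\Omega}$ a Rota-Baxter family of weight $\lambda$ on $L$ commuting with $p_\alpha$ and $q_\alpha$. Define $\langle x,y\rangle_{\alpha,\beta} := \lambda\{x,y\}_{\alpha,\beta}$ and $x\blacktriangleright_{\alpha,\beta}y := \{R_\alpha(x), y\}_{\alpha,\beta}$. Then $(L, \langle\cdot,\cdot\rangle_{\alpha,\beta}, \blacktriangleright_{\alpha,\beta}, p_\alpha, q_\alpha)_{\alpha,\beta\in\Omega}$ is a BiHom-$\Omega$-PostLie algebra. -/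
/-!
Everything reduces to one consequence of the BiHom-Ω-Jacobi identity, the BiHom-Ω-Leibniz rule
`{p_α q_α u, {y, z}_{β,γ}}_{α,βγ} = {{q_α u, y}_{α,β}, q_γ z}_{αβ,γ} + {q_β y, {p_α u, z}_{α,γ}}_{β,αγ}`,
which is Jacobi evaluated at preimages of `p_α u`, `y`, `z` under `q_α`, `q_β`, `p_γ` and rearranged
by skew-symmetry. With `u = R_α x` and scaled by `λ` it is the second PostLie axiom. For the first,
take `u = R_α x` and `y = R_β (p_β y)`: the Rota-Baxter identity expands `{R_α q_α x, R_β p_β y}`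
into `R_{αβ}` of three brackets, one of which is `⟨q_α x, p_β y⟩`, and skew-symmetry turns
`{q_α x, R_β p_β y}` into the last term of the axiom.
-/

section

variable {K Ω L : Type*} [CommRing K] [CommSemigroup Ω] [AddCommGroup L] [Module K L]

def BiHomLeibniz (br : Ω → Ω → L →ₗ[K] L →ₗ[K] L) (p q : Ω → L →ₗ[K] L) : Prop :=
  ∀ (α β γ : Ω) (u y z : L),
    br α (β * γ) (p α (q α u)) (br β γ y z)
      = br (α * β) γ (br α β (q α u) y) (q γ z) + br β (α * γ) (q β y) (br α γ (p α u) z)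

variable (br : Ω → Ω → L →ₗ[K] L →ₗ[K] L) (p q R : Ω → L →ₗ[K] L)

theorem biHomLeibniz_of_jacobi
    (hp : ∀ (α β : Ω) (x y : L), p (α * β) (br α β x y) = br α β (p α x) (p β y))
    (hq : ∀ (α β : Ω) (x y : L), q (α * β) (br α β x y) = br α β (q α x) (q β y))
    (hpq : ∀ (α : Ω) (x : L), p α (q α x) = q α (p α x))
    (hskew : ∀ (α β : Ω) (x y : L), br α β (q α x) (p β y) = - br β α (q β y) (p α x))
    (hjac : ∀ (α β γ : Ω) (x y z : L),
      br α (β * γ) (q α (q α x)) (br β γ (q β y) (p γ z))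
        + br β (γ * α) (q β (q β y)) (br γ α (q γ z) (p α x))
        + br γ (α * β) (q γ (q γ z)) (br α β (q α x) (p β y)) = 0)
    (hpsurj : ∀ α, Function.Surjective (p α)) (hqsurj : ∀ α, Function.Surjective (q α)) :
    BiHomLeibniz br p q := by
  intro α β γ u y z
  obtain ⟨a, rfl⟩ := hqsurj β y
  obtain ⟨b, rfl⟩ := hpsurj γ z
  obtain ⟨c, hc⟩ := hqsurj α (p α u)
  have hfirst : q α (q α c) = p α (q α u) := by rw [hc, hpq]
  have hsecond : br γ α (q γ b) (p α c) = - br α γ (p α u) (p γ b) := by rw [hskew, hc]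
  have hthird : br γ (α * β) (q γ (q γ b)) (br α β (q α c) (p β a))
      = - br (α * β) γ (br α β (q α u) (q β a)) (q γ (p γ b)) := by
    rw [hc, ← hp, hskew, hq, hpq]
  have h := hjac α β γ c a b
  rw [hfirst, hsecond, hthird, map_neg, mul_comm γ α] at h
  rw [← sub_eq_zero, ← h]
  abel

variable (lam : K) (nbr ob : Ω → Ω → L → L → L)

theorem rotaBaxter_postLie_compat (hleib : BiHomLeibniz br p q)
    (hpq : ∀ (α : Ω) (x : L), p α (q α x) = q α (p α x))
    (hskew : ∀ (α β : Ω) (x y : L), br α β (q α x) (p β y) = - br β α (q β y) (p α x))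
    (hRB : ∀ (α β : Ω) (x y : L),
      br α β (R α x) (R β y)
        = R (α * β) (br α β (R α x) y + br α β x (R β y) + lam • br α β x y))
    (hRp : ∀ (α : Ω) (x : L), R α (p α x) = p α (R α x))
    (hRq : ∀ (α : Ω) (x : L), R α (q α x) = q α (R α x))
    (hnbr : ∀ (α β : Ω) (x y : L), nbr α β x y = lam • br α β x y)
    (hob : ∀ (α β : Ω) (x y : L), ob α β x y = br α β (R α x) y)
    (α β γ : Ω) (x y z : L) :
    ob (α * β) γ (nbr α β (q α x) (p β y)) (q γ z)
      = ob α (β * γ) (p α (q α x)) (ob β γ (p β y) z)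
        - ob (α * β) γ (ob α β (q α x) (p β y)) (q γ z)
        - ob β (α * γ) (p β (q β y)) (ob α γ (p α x) z)
        + ob (β * α) γ (ob β α (q β y) (p α x)) (q γ z) := by
  have hmixed : br β α (R β (q β y)) (p α x) = - br α β (q α x) (R β (p β y)) := by
    rw [hRq, hRp, hskew]
  have h := hleib α β γ (R α x) (R β (p β y)) z
  rw [← hRq, hRB, ← hRp, ← hRp, ← hRq, ← hpq β y] at h
  simp only [map_add, LinearMap.add_apply] at h
  simp only [hob, hnbr, mul_comm β α, hmixed, h, map_neg, LinearMap.neg_apply]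
  abel

theorem rotaBaxter_postLie_leibniz (hleib : BiHomLeibniz br p q)
    (hRp : ∀ (α : Ω) (x : L), R α (p α x) = p α (R α x))
    (hRq : ∀ (α : Ω) (x : L), R α (q α x) = q α (R α x))
    (hnbr : ∀ (α β : Ω) (x y : L), nbr α β x y = lam • br α β x y)
    (hob : ∀ (α β : Ω) (x y : L), ob α β x y = br α β (R α x) y)
    (α β γ : Ω) (x y z : L) :
    ob α (β * γ) (p α (q α x)) (nbr β γ y z)
      = nbr (α * β) γ (ob α β (q α x) y) (q γ z)
        + nbr β (α * γ) (q β y) (ob α γ (p α x) z) := by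
  simp only [hob, hnbr, map_smul]
  rw [hRp, hRq, hleib, ← hRq, ← hRp, smul_add]

end

/-- A Rota-Baxter family of weight λ on a BiHom-Ω-Lie algebra with bijective structure
maps induces a BiHom-Ω-PostLie algebra. -/
theorem stmt_18
    {K : Type*} [Field K] {Ω : Type*} [CommSemigroup Ω]
    {L : Type*} [AddCommGroup L] [Module K L]
    (br : Ω → Ω → L →ₗ[K] L →ₗ[K] L)
    (p q : Ω → L →ₗ[K] L)
    (lam : K)
    -- (L, br, p, q) is a BiHom-Ω-Lie algebra
    (hp : ∀ (α β : Ω) (x y : L), p (α * β) (br α β x y) = br α β (p α x) (p β y))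
    (hq : ∀ (α β : Ω) (x y : L), q (α * β) (br α β x y) = br α β (q α x) (q β y))
    (hpq : ∀ (α : Ω) (x : L), p α (q α x) = q α (p α x))
    (hskew : ∀ (α β : Ω) (x y : L), br α β (q α x) (p β y) = - br β α (q β y) (p α x))
    (hjac : ∀ (α β γ : Ω) (x y z : L),
      br α (β * γ) (q α (q α x)) (br β γ (q β y) (p γ z))
        + br β (γ * α) (q β (q β y)) (br γ α (q γ z) (p α x))
        + br γ (α * β) (q γ (q γ z)) (br α β (q α x) (p β y)) = 0)
    -- p, q are bijective
    (hpbij : ∀ (α : Ω), Function.Bijective (p α))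
    (hqbij : ∀ (α : Ω), Function.Bijective (q α))
    -- (R_α) is a Rota-Baxter family of weight λ, commuting with p and q
    (R : Ω → L →ₗ[K] L)
    (hRB : ∀ (α β : Ω) (x y : L),
      br α β (R α x) (R β y)
        = R (α * β) (br α β (R α x) y + br α β x (R β y) + lam • br α β x y))
    (hRp : ∀ (α : Ω) (x : L), R α (p α x) = p α (R α x))
    (hRq : ∀ (α : Ω) (x : L), R α (q α x) = q α (R α x))
    -- the new operations
    (nbr ob : Ω → Ω → L → L → L)
    (hnbr : ∀ (α β : Ω) (x y : L), nbr α β x y = lam • br α β x y)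
    (hob : ∀ (α β : Ω) (x y : L), ob α β x y = br α β (R α x) y) :
    -- (L, nbr, ob, p, q) is a BiHom-Ω-PostLie algebra:
    -- (L, nbr, p, q) is a BiHom-Ω-Lie algebra
    (∀ (α β : Ω) (x y : L), p (α * β) (nbr α β x y) = nbr α β (p α x) (p β y)) ∧
    (∀ (α β : Ω) (x y : L), q (α * β) (nbr α β x y) = nbr α β (q α x) (q β y)) ∧
    (∀ (α β : Ω) (x y : L), nbr α β (q α x) (p β y) = - nbr β α (q β y) (p α x)) ∧
    (∀ (α β γ : Ω) (x y z : L),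
      nbr α (β * γ) (q α (q α x)) (nbr β γ (q β y) (p γ z))
        + nbr β (γ * α) (q β (q β y)) (nbr γ α (q γ z) (p α x))
        + nbr γ (α * β) (q γ (q γ z)) (nbr α β (q α x) (p β y)) = 0) ∧
    -- multiplicativity for ob
    (∀ (α β : Ω) (x y : L), p (α * β) (ob α β x y) = ob α β (p α x) (p β y)) ∧
    (∀ (α β : Ω) (x y : L), q (α * β) (ob α β x y) = ob α β (q α x) (q β y)) ∧
    -- BiHom-Ω-PostLie compatibility axioms
    (∀ (α β γ : Ω) (x y z : L),
      ob (α * β) γ (nbr α β (q α x) (p β y)) (q γ z)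
        = ob α (β * γ) (p α (q α x)) (ob β γ (p β y) z)
          - ob (α * β) γ (ob α β (q α x) (p β y)) (q γ z)
          - ob β (α * γ) (p β (q β y)) (ob α γ (p α x) z)
          + ob (β * α) γ (ob β α (q β y) (p α x)) (q γ z)) ∧
    (∀ (α β γ : Ω) (x y z : L),
      ob α (β * γ) (p α (q α x)) (nbr β γ y z)
        = nbr (α * β) γ (ob α β (q α x) y) (q γ z)
          + nbr β (α * γ) (q β y) (ob α γ (p α x) z)) := by
  have hleib := biHomLeibniz_of_jacobi br p q hp hq hpq hskew hjac
    (fun α => (hpbij α).surjective) (fun α => (hqbij α).surjective)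
  refine ⟨fun α β x y => ?_, fun α β x y => ?_, fun α β x y => ?_, fun α β γ x y z => ?_,
    fun α β x y => ?_, fun α β x y => ?_,
    rotaBaxter_postLie_compat br p q R lam nbr ob hleib hpq hskew hRB hRp hRq hnbr hob,
    rotaBaxter_postLie_leibniz br p q R lam nbr ob hleib hRp hRq hnbr hob⟩
  · rw [hnbr, hnbr, map_smul, hp]
  · rw [hnbr, hnbr, map_smul, hq]
  · rw [hnbr, hnbr, hskew, smul_neg]
  · simp only [hnbr, map_smul, smul_smul, ← smul_add, hjac, smul_zero]
  · rw [hob, hob, hp, hRp]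
  · rw [hob, hob, hq, hRq]
end
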